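/- arXiv:2008.07490 — 6 statements merged into one kernel-verified Lean document; each statement's English description precedes it below -/
import Mathlib

section
/- Assume the rotationally symmetric IMCF graph setup. Then for every t ∈ [0,T), max_{x∈[c(t),d(t)]} y(x,t) ≤ e^{t/(n−1)} · max_{x∈[c(0),d(0)]} y(x,0); that is, the height u = ⟨F,ŵ⟩ of the evolving hypersurface satisfies u(·,t) ≤ e^{t/(n−1)} · max_{N₀} u. -/
open Set Filter

section Aux

lemma deriv_nonneg_of_left_le {f : ℝ → ℝ} {a f' : ℝ} (hd : HasDerivAt f f' a)
    (h : ∀ᶠ t in nhdsWithin a (Iio a), f t ≤ f a) : 0 ≤ f' := by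
  have hs : Tendsto (slope f a) (nhdsWithin a (Iio a)) (nhds f') :=
    (hasDerivAt_iff_tendsto_slope.1 hd).mono_left
      (nhdsWithin_mono _ fun x (hx : x < a) => (by simpa using hx.ne : x ∈ ({a}ᶜ : Set ℝ)))
  refine ge_of_tendsto hs ?_
  filter_upwards [h, self_mem_nhdsWithin] with t ht ht'
  have ht'' : t < a := ht'
  rw [slope_def_field]
  have h1 : f t - f a ≤ 0 := by linarith
  have h2 : t - a < 0 := by linarith
  have := div_nonneg (neg_nonneg.2 h1) (neg_nonneg.2 h2.le)
  rwa [neg_div_neg_eq] at this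

lemma eventually_pos_right {g : ℝ → ℝ} {a g' : ℝ} (hd : HasDerivAt g g' a)
    (h0 : g a = 0) (hp : 0 < g') : ∀ᶠ x in nhdsWithin a (Ioi a), 0 < g x := by
  have hs : Tendsto (slope g a) (nhdsWithin a (Ioi a)) (nhds g') :=
    (hasDerivAt_iff_tendsto_slope.1 hd).mono_left
      (nhdsWithin_mono _ fun x (hx : a < x) => (by simpa using hx.ne' : x ∈ ({a}ᶜ : Set ℝ)))
  filter_upwards [hs.eventually (eventually_gt_nhds hp), self_mem_nhdsWithin] with x hx hx'
  have hx'' : a < x := hx'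
  rw [slope_def_field, h0, sub_zero] at hx
  have hxa : 0 < x - a := by linarith
  have := mul_pos hx hxa
  rwa [div_mul_cancel₀ _ hxa.ne'] at this

end Aux

/-- Rotationally symmetric inverse mean curvature flow in graph form:
for `t ∈ [0,T)`, the hypersurface of revolution `N_t ⊂ ℝ^{n+1}` is generated by
revolving the graph of `y (·, t) : [c t, d t] → ℝ` about the `x₁`-axis.
`yx`, `yxx`, `yt` are the partial derivatives `∂ₓ y`, `∂ₓₓ y`, `∂ₜ y`. -/
structure IMCFGraphSetup (n : ℕ) (T : EReal) where
  hn : 2 ≤ n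
  hT : 0 < T
  c : ℝ → ℝ
  d : ℝ → ℝ
  y : ℝ → ℝ → ℝ
  yx : ℝ → ℝ → ℝ
  yxx : ℝ → ℝ → ℝ
  yt : ℝ → ℝ → ℝ
  hc_cont : ContinuousOn c {t : ℝ | 0 ≤ t ∧ (t : EReal) < T}
  hd_cont : ContinuousOn d {t : ℝ | 0 ≤ t ∧ (t : EReal) < T}
  hcd : ∀ t : ℝ, 0 ≤ t → (t : EReal) < T → c t < d t
  hy_cont : ContinuousOn (fun q : ℝ × ℝ => y q.1 q.2)
    {q : ℝ × ℝ | 0 ≤ q.2 ∧ (q.2 : EReal) < T ∧ q.1 ∈ Icc (c q.2) (d q.2)}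
  hy_nonneg : ∀ x t : ℝ, 0 ≤ t → (t : EReal) < T → x ∈ Icc (c t) (d t) → 0 ≤ y x t
  hy_zero_c : ∀ t : ℝ, 0 ≤ t → (t : EReal) < T → y (c t) t = 0
  hy_zero_d : ∀ t : ℝ, 0 ≤ t → (t : EReal) < T → y (d t) t = 0
  hy_pos : ∀ x t : ℝ, 0 ≤ t → (t : EReal) < T → x ∈ Ioo (c t) (d t) → 0 < y x t
  hy_smooth : ContDiffOn ℝ (⊤ : ℕ∞) (fun q : ℝ × ℝ => y q.1 q.2)
    {q : ℝ × ℝ | 0 ≤ q.2 ∧ (q.2 : EReal) < T ∧ q.1 ∈ Ioo (c q.2) (d q.2)}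
  hyx : ∀ x t : ℝ, 0 ≤ t → (t : EReal) < T → x ∈ Ioo (c t) (d t) →
    HasDerivAt (fun x' => y x' t) (yx x t) x
  hyxx : ∀ x t : ℝ, 0 ≤ t → (t : EReal) < T → x ∈ Ioo (c t) (d t) →
    HasDerivAt (fun x' => yx x' t) (yxx x t) x
  hyt : ∀ x t : ℝ, 0 ≤ t → (t : EReal) < T → x ∈ Ioo (c t) (d t) →
    HasDerivAt (fun t' => y x t') (yt x t) t
  hyx_c : ∀ t : ℝ, 0 ≤ t → (t : EReal) < T →
    Tendsto (fun x => yx x t) (nhdsWithin (c t) (Ioi (c t))) atTop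
  hyx_d : ∀ t : ℝ, 0 ≤ t → (t : EReal) < T →
    Tendsto (fun x => yx x t) (nhdsWithin (d t) (Iio (d t))) atBot
  hH_pos : ∀ x t : ℝ, 0 ≤ t → (t : EReal) < T → x ∈ Ioo (c t) (d t) →
    0 < ((n : ℝ) - 1) / (y x t * Real.sqrt (1 + yx x t ^ 2))
        - yxx x t / (Real.sqrt (1 + yx x t ^ 2)) ^ 3
  hIMCF : ∀ x t : ℝ, 0 ≤ t → (t : EReal) < T → x ∈ Ioo (c t) (d t) →
    yt x t = Real.sqrt (1 + yx x t ^ 2) /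
      (((n : ℝ) - 1) / (y x t * Real.sqrt (1 + yx x t ^ 2))
        - yxx x t / (Real.sqrt (1 + yx x t ^ 2)) ^ 3)

namespace IMCFGraphSetup

variable {n : ℕ} {T : EReal}

/-- `v = √(1 + (∂ₓ y)²) = (⟨ŵ,ν⟩)⁻¹`. -/
noncomputable def v (S : IMCFGraphSetup n T) (x t : ℝ) : ℝ :=
  Real.sqrt (1 + S.yx x t ^ 2)

/-- The mean curvature of the hypersurface of revolution generated by `y (·, t)`. -/
noncomputable def H (S : IMCFGraphSetup n T) (x t : ℝ) : ℝ :=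
  ((n : ℝ) - 1) / (S.y x t * S.v x t) - S.yxx x t / (S.v x t) ^ 3

/-- The principal curvature of rotation `p = 1/(y v)`. -/
noncomputable def p (S : IMCFGraphSetup n T) (x t : ℝ) : ℝ :=
  1 / (S.y x t * S.v x t)

/-- The left endpoint `α(t)` of the closed bridge `L̄_t`. -/
noncomputable def alpha (S : IMCFGraphSetup n T) (t : ℝ) : ℝ :=
  sSup {z : ℝ | z ∈ Ioo (S.c t) (S.d t) ∧ ∀ x ∈ Ioo (S.c t) z, 0 ≤ S.yx x t}

/-- The right endpoint `β(t)` of the closed bridge `L̄_t`. -/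
noncomputable def beta (S : IMCFGraphSetup n T) (t : ℝ) : ℝ :=
  sInf {z : ℝ | z ∈ Ioo (S.c t) (S.d t) ∧ ∀ x ∈ Ioo z (S.d t), S.yx x t ≤ 0}

end IMCFGraphSetup

open Set Filter IMCFGraphSetup

/-- Proposition 5.3 (Height Estimate): the height of the evolving hypersurface satisfies
`max_{N_t} u ≤ e^{t/(n-1)} max_{N₀} u`, i.e. `y(x,t) ≤ e^{t/(n-1)} max y(·,0)`. -/
theorem height_estimate {n : ℕ} {T : EReal} (S : IMCFGraphSetup n T) :
    ∀ t : ℝ, 0 ≤ t → (t : EReal) < T →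
      sSup ((fun x' => S.y x' t) '' Icc (S.c t) (S.d t)) ≤
        Real.exp (t / ((n : ℝ) - 1)) *
          sSup ((fun x' => S.y x' 0) '' Icc (S.c 0) (S.d 0)) ∧
      ∀ x ∈ Icc (S.c t) (S.d t),
        S.y x t ≤ Real.exp (t / ((n : ℝ) - 1)) *
          sSup ((fun x' => S.y x' 0) '' Icc (S.c 0) (S.d 0)) := by
  intro t1 ht1 ht1T
  have hn2 : (2:ℝ) ≤ (n:ℝ) := by exact_mod_cast S.hn
  have hn0 : (0:ℝ) < (n:ℝ) - 1 := by linarith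
  set M0 := sSup ((fun x' => S.y x' 0) '' Icc (S.c 0) (S.d 0)) with hM0def
  have hTmem : ∀ t : ℝ, t ≤ t1 → (t : EReal) < T :=
    fun t h => lt_of_le_of_lt (EReal.coe_le_coe_iff.2 h) ht1T
  have h0T : ((0:ℝ) : EReal) < T := by
    have := S.hT; simpa using this
  have hcd0 : S.c 0 ≤ S.d 0 := (S.hcd 0 le_rfl h0T).le
  have hcd1 : S.c t1 ≤ S.d t1 := (S.hcd t1 ht1 ht1T).le
  have hy0cont : ContinuousOn (fun x => S.y x 0) (Icc (S.c 0) (S.d 0)) := by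
    have hmap : MapsTo (fun x : ℝ => (x, (0:ℝ))) (Icc (S.c 0) (S.d 0))
        {q : ℝ × ℝ | 0 ≤ q.2 ∧ (q.2 : EReal) < T ∧ q.1 ∈ Icc (S.c q.2) (S.d q.2)} :=
      fun x hx => ⟨le_rfl, h0T, hx⟩
    exact S.hy_cont.comp (Continuous.continuousOn (by fun_prop)) hmap
  have hbdd : BddAbove ((fun x' => S.y x' 0) '' Icc (S.c 0) (S.d 0)) :=
    isCompact_Icc.bddAbove_image hy0cont
  have hle0 : ∀ x ∈ Icc (S.c 0) (S.d 0), S.y x 0 ≤ M0 :=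
    fun x hx => le_csSup hbdd (mem_image_of_mem _ hx)
  have hM0nonneg : 0 ≤ M0 := by
    have h := hle0 (S.c 0) (left_mem_Icc.2 hcd0)
    rw [S.hy_zero_c 0 le_rfl h0T] at h; exact h
  -- the key pointwise estimate
  have key : ∀ x ∈ Icc (S.c t1) (S.d t1),
      S.y x t1 ≤ Real.exp (t1 / ((n:ℝ) - 1)) * M0 := by
    intro x hx
    have hA : S.y x t1 * Real.exp (-(t1 / ((n:ℝ) - 1))) ≤ M0 := by
      refine le_of_forall_pos_le_add ?_
      intro eta heta
      set ε := eta / (t1 + 1) with hepsdef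
      have hεpos : 0 < ε := div_pos heta (by linarith)
      set w : ℝ × ℝ → ℝ :=
        fun q => S.y q.1 q.2 * Real.exp (-(q.2 / ((n:ℝ) - 1))) - ε * q.2 with hw
      set D : Set (ℝ × ℝ) := {q | q.2 ∈ Icc 0 t1 ∧ q.1 ∈ Icc (S.c q.2) (S.d q.2)}
        with hD
      have hΩsub : Icc (0:ℝ) t1 ⊆ {t : ℝ | 0 ≤ t ∧ (t : EReal) < T} :=
        fun t ht => ⟨ht.1, hTmem t ht.2⟩
      have hccont : ContinuousOn S.c (Icc 0 t1) := S.hc_cont.mono hΩsub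
      have hdcont : ContinuousOn S.d (Icc 0 t1) := S.hd_cont.mono hΩsub
      have hDsub : D ⊆ {q : ℝ × ℝ | 0 ≤ q.2 ∧ (q.2 : EReal) < T ∧
          q.1 ∈ Icc (S.c q.2) (S.d q.2)} :=
        fun q hq => ⟨hq.1.1, hTmem q.2 hq.1.2, hq.2⟩
      have hwcont : ContinuousOn w D := by
        apply ContinuousOn.sub
        · exact (S.hy_cont.mono hDsub).mul (Continuous.continuousOn (by fun_prop))
        · exact Continuous.continuousOn (by fun_prop)
      -- D is compact
      have hA_closed : IsClosed {q : ℝ × ℝ | q.2 ∈ Icc 0 t1} :=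
        isClosed_Icc.preimage continuous_snd
      have hccont2 : ContinuousOn (fun q : ℝ × ℝ => q.1 - S.c q.2)
          {q : ℝ × ℝ | q.2 ∈ Icc 0 t1} := by
        apply ContinuousOn.sub continuous_fst.continuousOn
        exact hccont.comp continuous_snd.continuousOn (fun q hq => hq)
      have hdcont2 : ContinuousOn (fun q : ℝ × ℝ => S.d q.2 - q.1)
          {q : ℝ × ℝ | q.2 ∈ Icc 0 t1} := by
        apply ContinuousOn.sub
        · exact hdcont.comp continuous_snd.continuousOn (fun q hq => hq)
        · exact continuous_fst.continuousOn
      have hDeq : D = ({q : ℝ × ℝ | q.2 ∈ Icc 0 t1} ∩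
            (fun q : ℝ × ℝ => q.1 - S.c q.2) ⁻¹' Ici 0) ∩
          ({q : ℝ × ℝ | q.2 ∈ Icc 0 t1} ∩
            (fun q : ℝ × ℝ => S.d q.2 - q.1) ⁻¹' Ici 0) := by
        ext q
        simp only [hD, mem_setOf_eq, mem_Icc, mem_inter_iff, mem_preimage, mem_Ici,
          sub_nonneg]
        tauto
      have hDclosed : IsClosed D := by
        rw [hDeq]
        exact (hccont2.preimage_isClosed_of_isClosed hA_closed isClosed_Ici).inter
          (hdcont2.preimage_isClosed_of_isClosed hA_closed isClosed_Ici)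
      have hcbdd : BddBelow (S.c '' Icc 0 t1) := isCompact_Icc.bddBelow_image hccont
      have hdbdd : BddAbove (S.d '' Icc 0 t1) := isCompact_Icc.bddAbove_image hdcont
      set a0 := sInf (S.c '' Icc 0 t1)
      set b0 := sSup (S.d '' Icc 0 t1)
      have hDcomp : IsCompact D := by
        apply (isCompact_Icc.prod isCompact_Icc :
          IsCompact (Icc a0 b0 ×ˢ Icc 0 t1)).of_isClosed_subset hDclosed
        rintro ⟨qx, qt⟩ hq
        refine ⟨⟨?_, ?_⟩, hq.1⟩
        · exact le_trans (csInf_le hcbdd (mem_image_of_mem S.c hq.1)) hq.2.1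
        · exact le_trans hq.2.2 (le_csSup hdbdd (mem_image_of_mem S.d hq.1))
      have hDne : D.Nonempty := ⟨(S.c 0, 0), ⟨⟨le_rfl, ht1⟩, left_mem_Icc.2 hcd0⟩⟩
      obtain ⟨⟨x0, t0⟩, hq0D, hq0max⟩ := hDcomp.exists_isMaxOn hDne hwcont
      -- claim: the max value is ≤ M0
      have hmaxle : w (x0, t0) ≤ M0 := by
        by_contra hcon
        push_neg at hcon
        have ht0mem : t0 ∈ Icc 0 t1 := hq0D.1
        have hx0Icc : x0 ∈ Icc (S.c t0) (S.d t0) := hq0D.2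
        have ht0T : (t0 : EReal) < T := hTmem t0 ht0mem.2
        have ht0pos : 0 < t0 := by
          rcases ht0mem.1.lt_or_eq with h | h
          · exact h
          · exfalso
            apply absurd hcon
            push_neg
            have hx0' : x0 ∈ Icc (S.c 0) (S.d 0) := by rw [h]; exact hx0Icc
            have := hle0 x0 hx0'
            simp only [hw, ← h]
            simpa using this
        have hypos : 0 < S.y x0 t0 := by
          rcases (S.hy_nonneg x0 t0 ht0mem.1 ht0T hx0Icc).lt_or_eq with h | h
          · exact h
          · exfalso
            apply absurd hcon
            push_neg
            simp only [hw, ← h]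
            have h1 : -(ε * t0) ≤ 0 := by nlinarith
            simpa using le_trans h1 hM0nonneg
        have hx0mem : x0 ∈ Ioo (S.c t0) (S.d t0) := by
          constructor
          · rcases hx0Icc.1.lt_or_eq with h | h
            · exact h
            · exfalso
              rw [← h, S.hy_zero_c t0 ht0mem.1 ht0T] at hypos
              exact lt_irrefl 0 hypos
          · rcases hx0Icc.2.lt_or_eq with h | h
            · exact h
            · exfalso
              rw [h, S.hy_zero_d t0 ht0mem.1 ht0T] at hypos
              exact lt_irrefl 0 hypos
        have hE : 0 < Real.exp (-(t0 / ((n:ℝ) - 1))) := Real.exp_pos _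
        have hymax : ∀ x' ∈ Icc (S.c t0) (S.d t0), S.y x' t0 ≤ S.y x0 t0 := by
          intro x' hx'
          have h := hq0max (show ((x', t0) : ℝ × ℝ) ∈ D from ⟨ht0mem, hx'⟩)
          simp only [hw, mem_setOf_eq] at h
          have h' : S.y x' t0 * Real.exp (-(t0 / ((n:ℝ) - 1))) ≤
              S.y x0 t0 * Real.exp (-(t0 / ((n:ℝ) - 1))) := by
            linarith
          exact le_of_mul_le_mul_right h' hE
        have hyx0 : S.yx x0 t0 = 0 := by
          have hloc : IsLocalMax (fun x' => S.y x' t0) x0 := by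
            filter_upwards [Ioo_mem_nhds hx0mem.1 hx0mem.2] with x' hx'
            exact hymax x' (Ioo_subset_Icc_self hx')
          exact hloc.hasDerivAt_eq_zero (S.hyx x0 t0 ht0mem.1 ht0T hx0mem)
        have hyxx0 : S.yxx x0 t0 ≤ 0 := by
          by_contra h
          push_neg at h
          have hev : ∀ᶠ x' in nhdsWithin x0 (Ioi x0), 0 < S.yx x' t0 :=
            eventually_pos_right (S.hyxx x0 t0 ht0mem.1 ht0T hx0mem) hyx0 h
          have hev2 : ∀ᶠ x' in nhdsWithin x0 (Ioi x0), x' < S.d t0 :=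
            (eventually_lt_nhds hx0mem.2).filter_mono nhdsWithin_le_nhds
          obtain ⟨u, hu, hsub⟩ := mem_nhdsGT_iff_exists_Ioo_subset.1
            (hev.and hev2)
          have hx0u : x0 < u := hu
          set x' := (x0 + u) / 2 with hx'def
          have hx'1 : x0 < x' := by simp only [hx'def]; linarith
          have hx'2 : x' < u := by simp only [hx'def]; linarith
          have hx'mem := hsub ⟨hx'1, hx'2⟩
          have hIoosub : ∀ z ∈ Icc x0 x', z ∈ Ioo (S.c t0) (S.d t0) :=
            fun z hz => ⟨lt_of_lt_of_le hx0mem.1 hz.1, lt_of_le_of_lt hz.2 hx'mem.2⟩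
          have hcontI : ContinuousOn (fun x'' => S.y x'' t0) (Icc x0 x') :=
            fun z hz => ((S.hyx z t0 ht0mem.1 ht0T (hIoosub z hz)).continuousAt).continuousWithinAt
          obtain ⟨ξ, hξ, hslope⟩ := exists_hasDerivAt_eq_slope
            (fun x'' => S.y x'' t0) (fun x'' => S.yx x'' t0) hx'1 hcontI
            (fun z hz => S.hyx z t0 ht0mem.1 ht0T (hIoosub z (Ioo_subset_Icc_self hz)))
          have hξpos : 0 < S.yx ξ t0 := (hsub ⟨hξ.1, hξ.2.trans hx'2⟩).1
          rw [hslope] at hξpos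
          have hdpos : 0 < x' - x0 := by linarith
          have hnum : 0 < S.y x' t0 - S.y x0 t0 := by
            have h2 := mul_pos hξpos hdpos
            rwa [div_mul_cancel₀ _ hdpos.ne'] at h2
          have hcle : S.c t0 ≤ x' := (hx0mem.1.trans hx'1).le
          have := hymax x' ⟨hcle, hx'mem.2.le⟩
          linarith
        -- curvature estimates at (x0, t0)
        have hH := S.hH_pos x0 t0 ht0mem.1 ht0T hx0mem
        have hIM := S.hIMCF x0 t0 ht0mem.1 ht0T hx0mem
        have hsq : Real.sqrt (1 + S.yx x0 t0 ^ 2) = 1 := by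
          rw [hyx0]; norm_num
        rw [hsq] at hH hIM
        simp only [mul_one, one_pow, div_one] at hH hIM
        have hytle : S.yt x0 t0 ≤ S.y x0 t0 / ((n:ℝ) - 1) := by
          rw [hIM]
          have h3 : 0 < ((n:ℝ) - 1) / S.y x0 t0 := div_pos hn0 hypos
          have h2 : ((n:ℝ) - 1) / S.y x0 t0 ≤
              ((n:ℝ) - 1) / S.y x0 t0 - S.yxx x0 t0 := by linarith
          calc 1 / (((n:ℝ) - 1) / S.y x0 t0 - S.yxx x0 t0)
              ≤ 1 / (((n:ℝ) - 1) / S.y x0 t0) := one_div_le_one_div_of_le h3 h2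
            _ = S.y x0 t0 / ((n:ℝ) - 1) := one_div_div _ _
        -- time derivative of φ at t0
        set E0 := Real.exp (-(t0 / ((n:ℝ) - 1))) with hE0def
        have hφd : HasDerivAt (fun t => S.y x0 t * Real.exp (-(t / ((n:ℝ) - 1))) - ε * t)
            (S.yt x0 t0 * E0 + S.y x0 t0 * (E0 * (-(1 / ((n:ℝ) - 1)))) - ε) t0 := by
          have h1 := S.hyt x0 t0 ht0mem.1 ht0T hx0mem
          have hin : HasDerivAt (fun t : ℝ => -(t / ((n:ℝ) - 1))) (-(1 / ((n:ℝ) - 1))) t0 := by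
            simpa [one_div] using ((hasDerivAt_id t0).div_const ((n:ℝ) - 1)).fun_neg
          have h2 : HasDerivAt (fun t => Real.exp (-(t / ((n:ℝ) - 1))))
              (E0 * (-(1 / ((n:ℝ) - 1)))) t0 := by
            simpa [hE0def] using hin.exp
          have h3 : HasDerivAt (fun t : ℝ => ε * t) ε t0 := by
            simpa using (hasDerivAt_id t0).const_mul ε
          exact (h1.mul h2).sub h3
        -- the derivative is nonnegative (left max) but negative: contradiction
        have hφleft : ∀ᶠ t in nhdsWithin t0 (Iio t0),
            (fun t => S.y x0 t * Real.exp (-(t / ((n:ℝ) - 1))) - ε * t) t ≤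
            (fun t => S.y x0 t * Real.exp (-(t / ((n:ℝ) - 1))) - ε * t) t0 := by
          have hΩnhds : {t : ℝ | 0 ≤ t ∧ (t : EReal) < T} ∈ nhds t0 := by
            have hopen : IsOpen (Ioi (0:ℝ) ∩ Real.toEReal ⁻¹' Iio T) :=
              isOpen_Ioi.inter (isOpen_Iio.preimage continuous_coe_real_ereal)
            exact mem_of_superset (hopen.mem_nhds ⟨ht0pos, ht0T⟩)
              (fun t ht => ⟨ht.1.le, ht.2⟩)
          have hcat : ContinuousAt S.c t0 := S.hc_cont.continuousAt hΩnhds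
          have hdat : ContinuousAt S.d t0 := S.hd_cont.continuousAt hΩnhds
          have hevc : ∀ᶠ t in nhds t0, S.c t < x0 :=
            hcat.eventually_lt continuousAt_const hx0mem.1
          have hevd : ∀ᶠ t in nhds t0, x0 < S.d t :=
            continuousAt_const.eventually_lt hdat hx0mem.2
          have hevp : ∀ᶠ t in nhds t0, 0 < t := eventually_gt_nhds ht0pos
          filter_upwards [((hevc.and hevd).and hevp).filter_mono nhdsWithin_le_nhds,
            self_mem_nhdsWithin] with t ht htlt
          have htlt' : t < t0 := htlt
          have hmem : ((x0, t) : ℝ × ℝ) ∈ D :=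
            ⟨⟨ht.2.le, le_trans htlt'.le ht0mem.2⟩, ⟨ht.1.1.le, ht.1.2.le⟩⟩
          have := hq0max hmem
          simpa [hw] using this
        have hφnonneg : 0 ≤ S.yt x0 t0 * E0 + S.y x0 t0 * (E0 * (-(1 / ((n:ℝ) - 1)))) - ε :=
          deriv_nonneg_of_left_le hφd hφleft
        have hφneg : S.yt x0 t0 * E0 + S.y x0 t0 * (E0 * (-(1 / ((n:ℝ) - 1)))) - ε < 0 := by
          have hEpos : 0 < E0 := Real.exp_pos _
          have h1 : S.yt x0 t0 * E0 ≤ (S.y x0 t0 / ((n:ℝ) - 1)) * E0 :=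
            mul_le_mul_of_nonneg_right hytle hEpos.le
          have h2 : S.y x0 t0 * (E0 * (-(1 / ((n:ℝ) - 1)))) =
              -((S.y x0 t0 / ((n:ℝ) - 1)) * E0) := by field_simp
          rw [h2]; linarith
        linarith
      -- conclude from the max being ≤ M0
      have hxt1D : ((x, t1) : ℝ × ℝ) ∈ D := ⟨⟨ht1, le_rfl⟩, hx⟩
      have h := le_trans (hq0max hxt1D) hmaxle
      simp only [hw, mem_setOf_eq] at h
      have hεt1 : ε * t1 ≤ eta := by
        rw [hepsdef, div_mul_eq_mul_div, div_le_iff₀ (by linarith : (0:ℝ) < t1 + 1)]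
        nlinarith
      linarith
    -- convert hA to the stated form
    have hEpos := Real.exp_pos (t1 / ((n:ℝ) - 1))
    have hEE : Real.exp (-(t1 / ((n:ℝ) - 1))) * Real.exp (t1 / ((n:ℝ) - 1)) = 1 := by
      rw [← Real.exp_add]; simp
    calc S.y x t1 = S.y x t1 * (Real.exp (-(t1 / ((n:ℝ) - 1))) * Real.exp (t1 / ((n:ℝ) - 1))) := by
          rw [hEE, mul_one]
      _ = (S.y x t1 * Real.exp (-(t1 / ((n:ℝ) - 1)))) * Real.exp (t1 / ((n:ℝ) - 1)) := by ring
      _ ≤ M0 * Real.exp (t1 / ((n:ℝ) - 1)) := mul_le_mul_of_nonneg_right hA hEpos.le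
      _ = Real.exp (t1 / ((n:ℝ) - 1)) * M0 := mul_comm _ _
  refine ⟨?_, key⟩
  apply csSup_le (Nonempty.image _ (nonempty_Icc.2 hcd1))
  rintro b ⟨x, hx, rfl⟩
  exact key x hx
end

section
/- Assume the rotationally symmetric IMCF graph setup. Then for every t ∈ [0,T): ∂ₓy(α(t),t) = 0 and ∂ₓₓy(α(t),t) ≤ 0 (so α(t) is a local maximum point of y(·,t)), and consequently H(α(t),t) ≥ (n−1)/y(α(t),t) ≥ (n−1)·e^{−t/(n−1)} / max_{x∈[c(0),d(0)]} y(x,0); the same statements hold at β(t). In particular the mean curvature on the boundary of the bridge satisfies H|_{∂L_t} ≥ (n−1)e^{−t/(n−1)} / max_{N₀} u. -/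
open Set Filter

open Set Filter IMCFGraphSetup

section AuxLemmas

variable {n : ℕ} {T : EReal}

private lemma aux_one_le (S : IMCFGraphSetup n T) : (1:ℝ) ≤ (n:ℝ) - 1 := by
  have : (2:ℝ) ≤ (n:ℝ) := by exact_mod_cast S.hn
  linarith

/-- Basic properties of `α(t)`: it lies in the interior, `yx` vanishes there,
and `yxx ≤ 0` there. -/
private lemma alpha_spec (S : IMCFGraphSetup n T) {t : ℝ} (ht0 : 0 ≤ t) (htT : (t:EReal) < T) :
    S.alpha t ∈ Ioo (S.c t) (S.d t) ∧ S.yx (S.alpha t) t = 0 ∧ S.yxx (S.alpha t) t ≤ 0 := by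
  set A : Set ℝ := {z : ℝ | z ∈ Ioo (S.c t) (S.d t) ∧ ∀ x ∈ Ioo (S.c t) z, 0 ≤ S.yx x t}
    with hA
  have halpha : S.alpha t = sSup A := rfl
  have hcd := S.hcd t ht0 htT
  obtain ⟨u, hu, husub⟩ : ∃ u ∈ Ioi (S.c t), Ioo (S.c t) u ⊆ {x | (1:ℝ) ≤ S.yx x t} := by
    rw [← mem_nhdsGT_iff_exists_Ioo_subset]
    exact (S.hyx_c t ht0 htT).eventually (eventually_ge_atTop 1)
  obtain ⟨l, hl, hlsub⟩ : ∃ l ∈ Iio (S.d t), Ioo l (S.d t) ⊆ {x | S.yx x t ≤ -1} := by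
    rw [← mem_nhdsLT_iff_exists_Ioo_subset]
    exact (S.hyx_d t ht0 htT).eventually (eventually_le_atBot (-1))
  have hminu : S.c t < min u (S.d t) := lt_min hu hcd
  set z₀ : ℝ := (S.c t + min u (S.d t)) / 2 with hz₀
  have hz₀c : S.c t < z₀ := by rw [hz₀]; linarith
  have hz₀m : z₀ < min u (S.d t) := by rw [hz₀]; linarith
  have hz₀A : z₀ ∈ A := by
    refine ⟨⟨hz₀c, lt_of_lt_of_le hz₀m (min_le_right _ _)⟩, ?_⟩
    intro x hx
    have hxu : x < u := hx.2.trans (hz₀m.trans_le (min_le_left _ _))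
    exact le_trans zero_le_one (husub ⟨hx.1, hxu⟩)
  have hne : A.Nonempty := ⟨z₀, hz₀A⟩
  have hbdd : ∀ z ∈ A, z ≤ max (S.c t) l := by
    intro z hz
    by_contra hzgt
    push_neg at hzgt
    set x := (max (S.c t) l + z) / 2 with hxdef
    have hx1 : max (S.c t) l < x := by rw [hxdef]; linarith
    have hx2 : x < z := by rw [hxdef]; linarith
    have hxc : S.c t < x := lt_of_le_of_lt (le_max_left _ _) hx1
    have hxl : l < x := lt_of_le_of_lt (le_max_right _ _) hx1
    have hxd : x < S.d t := hx2.trans hz.1.2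
    have h1 := hz.2 x ⟨hxc, hx2⟩
    have h2 := hlsub ⟨hxl, hxd⟩
    simp only [mem_setOf_eq] at h2
    linarith
  have hAbdd : BddAbove A := ⟨_, hbdd⟩
  have halle : sSup A ≤ max (S.c t) l := csSup_le hne hbdd
  have hαd : S.alpha t < S.d t := by
    rw [halpha]; exact lt_of_le_of_lt halle (max_lt hcd hl)
  have hαc : S.c t < S.alpha t := by
    rw [halpha]; exact lt_of_lt_of_le hz₀c (le_csSup hAbdd hz₀A)
  have hαIoo : S.alpha t ∈ Ioo (S.c t) (S.d t) := ⟨hαc, hαd⟩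
  have hleft : ∀ x ∈ Ioo (S.c t) (S.alpha t), 0 ≤ S.yx x t := by
    intro x hx
    obtain ⟨z, hzA, hxz⟩ := exists_lt_of_lt_csSup hne (halpha ▸ hx.2)
    exact hzA.2 x ⟨hx.1, hxz⟩
  have hcont : ContinuousAt (fun x' => S.yx x' t) (S.alpha t) :=
    (S.hyxx _ t ht0 htT hαIoo).continuousAt
  have hge : 0 ≤ S.yx (S.alpha t) t := by
    have hten : Tendsto (fun x' => S.yx x' t) (nhdsWithin (S.alpha t) (Iio (S.alpha t)))
        (nhds (S.yx (S.alpha t) t)) :=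
      (hcont.continuousWithinAt : ContinuousWithinAt _ (Iio (S.alpha t)) _)
    refine ge_of_tendsto hten ?_
    filter_upwards [Ioo_mem_nhdsLT_of_mem ⟨hαc, le_refl _⟩] with x hx
    exact hleft x hx
  have hle : S.yx (S.alpha t) t ≤ 0 := by
    by_contra hpos
    push_neg at hpos
    have hev : ∀ᶠ x' in nhds (S.alpha t), 0 < S.yx x' t :=
      Filter.Tendsto.eventually hcont (eventually_gt_nhds hpos)
    obtain ⟨l', u', hmem, hsub⟩ := mem_nhds_iff_exists_Ioo_subset.mp hev
    have hαu' : S.alpha t < min u' (S.d t) := lt_min hmem.2 hαd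
    set z₁ : ℝ := (S.alpha t + min u' (S.d t)) / 2 with hz₁
    have hz₁α : S.alpha t < z₁ := by rw [hz₁]; linarith
    have hz₁m : z₁ < min u' (S.d t) := by rw [hz₁]; linarith
    have hz₁A : z₁ ∈ A := by
      refine ⟨⟨hαc.trans hz₁α, lt_of_lt_of_le hz₁m (min_le_right _ _)⟩, ?_⟩
      intro x hx
      rcases lt_trichotomy x (S.alpha t) with h | h | h
      · exact hleft x ⟨hx.1, h⟩
      · subst h; exact hpos.le
      · have hxu' : x < u' := hx.2.trans (hz₁m.trans_le (min_le_left _ _))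
        exact (hsub ⟨hmem.1.trans h, hxu'⟩).le
    have := le_csSup hAbdd hz₁A
    rw [← halpha] at this
    linarith
  have hzero : S.yx (S.alpha t) t = 0 := le_antisymm hle hge
  refine ⟨hαIoo, hzero, ?_⟩
  have hslope := hasDerivAt_iff_tendsto_slope.mp (S.hyxx _ t ht0 htT hαIoo)
  have hmono : Iio (S.alpha t) ⊆ {S.alpha t}ᶜ := fun x hx => ne_of_lt hx
  refine le_of_tendsto (hslope.mono_left (nhdsWithin_mono _ hmono)) ?_
  filter_upwards [Ioo_mem_nhdsLT_of_mem ⟨hαc, le_refl _⟩] with x hx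
  rw [slope_def_field, hzero, sub_zero]
  exact div_nonpos_of_nonneg_of_nonpos (hleft x hx) (by linarith [hx.2])

/-- Basic properties of `β(t)`. -/
private lemma beta_spec (S : IMCFGraphSetup n T) {t : ℝ} (ht0 : 0 ≤ t) (htT : (t:EReal) < T) :
    S.beta t ∈ Ioo (S.c t) (S.d t) ∧ S.yx (S.beta t) t = 0 ∧ S.yxx (S.beta t) t ≤ 0 := by
  set B : Set ℝ := {z : ℝ | z ∈ Ioo (S.c t) (S.d t) ∧ ∀ x ∈ Ioo z (S.d t), S.yx x t ≤ 0}
    with hB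
  have hbeta : S.beta t = sInf B := rfl
  have hcd := S.hcd t ht0 htT
  obtain ⟨u, hu, husub⟩ : ∃ u ∈ Ioi (S.c t), Ioo (S.c t) u ⊆ {x | (1:ℝ) ≤ S.yx x t} := by
    rw [← mem_nhdsGT_iff_exists_Ioo_subset]
    exact (S.hyx_c t ht0 htT).eventually (eventually_ge_atTop 1)
  obtain ⟨l, hl, hlsub⟩ : ∃ l ∈ Iio (S.d t), Ioo l (S.d t) ⊆ {x | S.yx x t ≤ -1} := by
    rw [← mem_nhdsLT_iff_exists_Ioo_subset]
    exact (S.hyx_d t ht0 htT).eventually (eventually_le_atBot (-1))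
  have hmaxl : max l (S.c t) < S.d t := max_lt hl hcd
  set z₀ : ℝ := (max l (S.c t) + S.d t) / 2 with hz₀
  have hz₀d : z₀ < S.d t := by rw [hz₀]; linarith
  have hz₀m : max l (S.c t) < z₀ := by rw [hz₀]; linarith
  have hz₀B : z₀ ∈ B := by
    refine ⟨⟨lt_of_le_of_lt (le_max_right _ _) hz₀m, hz₀d⟩, ?_⟩
    intro x hx
    have hxl : l < x := lt_of_le_of_lt (le_max_left _ _) (hz₀m.trans hx.1)
    have := hlsub ⟨hxl, hx.2⟩
    simp only [mem_setOf_eq] at this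
    linarith
  have hne : B.Nonempty := ⟨z₀, hz₀B⟩
  have hbdd : ∀ z ∈ B, min u (S.d t) ≤ z := by
    intro z hz
    by_contra hzgt
    push_neg at hzgt
    set x := (z + min u (S.d t)) / 2 with hxdef
    have hx1 : z < x := by rw [hxdef]; linarith
    have hx2 : x < min u (S.d t) := by rw [hxdef]; linarith
    have hxu : x < u := lt_of_lt_of_le hx2 (min_le_left _ _)
    have hxd : x < S.d t := lt_of_lt_of_le hx2 (min_le_right _ _)
    have hxc : S.c t < x := hz.1.1.trans hx1
    have h1 := hz.2 x ⟨hx1, hxd⟩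
    have h2 := husub ⟨hxc, hxu⟩
    simp only [mem_setOf_eq] at h2
    linarith
  have hBbdd : BddBelow B := ⟨_, hbdd⟩
  have halle : min u (S.d t) ≤ sInf B := le_csInf hne hbdd
  have hβc : S.c t < S.beta t := by
    rw [hbeta]; exact lt_of_lt_of_le (lt_min hu hcd) halle
  have hβd : S.beta t < S.d t := by
    rw [hbeta]; exact lt_of_le_of_lt (csInf_le hBbdd hz₀B) hz₀d
  have hβIoo : S.beta t ∈ Ioo (S.c t) (S.d t) := ⟨hβc, hβd⟩
  have hright : ∀ x ∈ Ioo (S.beta t) (S.d t), S.yx x t ≤ 0 := by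
    intro x hx
    obtain ⟨z, hzB, hxz⟩ := exists_lt_of_csInf_lt hne (hbeta ▸ hx.1)
    exact hzB.2 x ⟨hxz, hx.2⟩
  have hcont : ContinuousAt (fun x' => S.yx x' t) (S.beta t) :=
    (S.hyxx _ t ht0 htT hβIoo).continuousAt
  have hle : S.yx (S.beta t) t ≤ 0 := by
    have hten : Tendsto (fun x' => S.yx x' t) (nhdsWithin (S.beta t) (Ioi (S.beta t)))
        (nhds (S.yx (S.beta t) t)) :=
      (hcont.continuousWithinAt : ContinuousWithinAt _ (Ioi (S.beta t)) _)
    refine le_of_tendsto hten ?_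
    filter_upwards [Ioo_mem_nhdsGT_of_mem ⟨le_refl _, hβd⟩] with x hx
    exact hright x hx
  have hge : 0 ≤ S.yx (S.beta t) t := by
    by_contra hneg
    push_neg at hneg
    have hev : ∀ᶠ x' in nhds (S.beta t), S.yx x' t < 0 :=
      Filter.Tendsto.eventually hcont (eventually_lt_nhds hneg)
    obtain ⟨l', u', hmem, hsub⟩ := mem_nhds_iff_exists_Ioo_subset.mp hev
    have hβl' : max l' (S.c t) < S.beta t := max_lt hmem.1 hβc
    set z₁ : ℝ := (max l' (S.c t) + S.beta t) / 2 with hz₁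
    have hz₁β : z₁ < S.beta t := by rw [hz₁]; linarith
    have hz₁m : max l' (S.c t) < z₁ := by rw [hz₁]; linarith
    have hz₁B : z₁ ∈ B := by
      refine ⟨⟨lt_of_le_of_lt (le_max_right _ _) hz₁m, hz₁β.trans hβd⟩, ?_⟩
      intro x hx
      rcases lt_trichotomy x (S.beta t) with h | h | h
      · have hxl' : l' < x := lt_of_le_of_lt (le_max_left _ _) (hz₁m.trans hx.1)
        exact (hsub ⟨hxl', h.trans hmem.2⟩).le
      · subst h; exact hneg.le
      · exact hright x ⟨h, hx.2⟩
    have := csInf_le hBbdd hz₁B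
    rw [← hbeta] at this
    linarith
  have hzero : S.yx (S.beta t) t = 0 := le_antisymm hle hge
  refine ⟨hβIoo, hzero, ?_⟩
  have hslope := hasDerivAt_iff_tendsto_slope.mp (S.hyxx _ t ht0 htT hβIoo)
  have hmono : Ioi (S.beta t) ⊆ {S.beta t}ᶜ := fun x hx => (ne_of_lt hx).symm
  refine le_of_tendsto (hslope.mono_left (nhdsWithin_mono _ hmono)) ?_
  filter_upwards [Ioo_mem_nhdsGT_of_mem ⟨le_refl _, hβd⟩] with x hx
  rw [slope_def_field, hzero, sub_zero]
  exact div_nonpos_of_nonpos_of_nonneg (hright x hx) (by linarith [hx.1])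

/-- At an interior critical point with `yxx ≤ 0`, the mean curvature is at least `(n-1)/y`. -/
private lemma crit_H_bound (S : IMCFGraphSetup n T) {t x : ℝ}
    (h0 : S.yx x t = 0) (h2 : S.yxx x t ≤ 0) :
    ((n:ℝ) - 1) / S.y x t ≤ S.H x t := by
  have hv : S.v x t = 1 := by simp [IMCFGraphSetup.v, h0]
  rw [IMCFGraphSetup.H, hv]
  simp only [mul_one, one_pow, div_one]
  linarith

/-- Exponential height bound `y(x,t) ≤ (max_{N₀} u) e^{t/(n-1)}` via the maximum principle. -/
private lemma sup_bound (S : IMCFGraphSetup n T) {t₁ x₁ : ℝ} (ht0 : 0 ≤ t₁)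
    (htT : (t₁:EReal) < T) (hx : x₁ ∈ Ioo (S.c t₁) (S.d t₁)) :
    S.y x₁ t₁ ≤ sSup ((fun x' => S.y x' 0) '' Icc (S.c 0) (S.d 0)) *
      Real.exp (t₁ / ((n:ℝ) - 1)) := by
  have hn1 : (1:ℝ) ≤ (n:ℝ) - 1 := aux_one_le S
  have h0T : ((0:ℝ):EReal) < T := by exact_mod_cast S.hT
  have hcoe : ∀ s : ℝ, s ≤ t₁ → (s:EReal) < T := fun s hs =>
    lt_of_le_of_lt (EReal.coe_le_coe_iff.mpr hs) htT
  have hcd0 : S.c 0 < S.d 0 := S.hcd 0 le_rfl h0T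
  set M₀ : ℝ := sSup ((fun x' => S.y x' 0) '' Icc (S.c 0) (S.d 0)) with hM₀
  have hy0cont : ContinuousOn (fun x => S.y x 0) (Icc (S.c 0) (S.d 0)) := by
    have hmap : MapsTo (fun x : ℝ => (x, (0:ℝ))) (Icc (S.c 0) (S.d 0))
        {q : ℝ × ℝ | 0 ≤ q.2 ∧ (q.2 : EReal) < T ∧ q.1 ∈ Icc (S.c q.2) (S.d q.2)} :=
      fun x hx => ⟨le_rfl, h0T, hx⟩
    have := S.hy_cont.comp
      (Continuous.continuousOn (continuous_id.prodMk continuous_const)) hmap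
    exact this
  have himg_bdd : BddAbove ((fun x' => S.y x' 0) '' Icc (S.c 0) (S.d 0)) :=
    (isCompact_Icc.image_of_continuousOn hy0cont).bddAbove
  have hM₀le : ∀ x ∈ Icc (S.c 0) (S.d 0), S.y x 0 ≤ M₀ := fun x hx =>
    le_csSup himg_bdd ⟨x, hx, rfl⟩
  have hM₀0 : 0 ≤ M₀ := by
    have h := hM₀le (S.c 0) ⟨le_rfl, hcd0.le⟩
    rwa [S.hy_zero_c 0 le_rfl h0T] at h
  set π : ℝ → ℝ := fun s => max 0 (min s t₁) with hπ
  have hπcont : Continuous π := continuous_const.max (continuous_id.min continuous_const)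
  have hπmem : ∀ s : ℝ, π s ∈ Icc 0 t₁ := fun s =>
    ⟨le_max_left _ _, max_le ht0 (min_le_right _ _)⟩
  have hπeq : ∀ s ∈ Icc (0:ℝ) t₁, π s = s := fun s hs => by
    rw [hπ]; simp only; rw [min_eq_left hs.2, max_eq_right hs.1]
  have hIccsub : Icc (0:ℝ) t₁ ⊆ {t : ℝ | 0 ≤ t ∧ (t : EReal) < T} := fun s hs =>
    ⟨hs.1, hcoe s hs.2⟩
  set cP : ℝ → ℝ := fun s => S.c (π s) with hcPdef
  set dP : ℝ → ℝ := fun s => S.d (π s) with hdPdef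
  have hcPcont : Continuous cP := (S.hc_cont.mono hIccsub).comp_continuous hπcont hπmem
  have hdPcont : Continuous dP := (S.hd_cont.mono hIccsub).comp_continuous hπcont hπmem
  have hcPeq : ∀ s ∈ Icc (0:ℝ) t₁, cP s = S.c s := fun s hs => by
    rw [hcPdef]; simp only; rw [hπeq s hs]
  have hdPeq : ∀ s ∈ Icc (0:ℝ) t₁, dP s = S.d s := fun s hs => by
    rw [hdPdef]; simp only; rw [hπeq s hs]
  set D : Set (ℝ × ℝ) := {q : ℝ × ℝ | 0 ≤ q.2 ∧ q.2 ≤ t₁ ∧ cP q.2 ≤ q.1 ∧ q.1 ≤ dP q.2} with hD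
  have hDclosed : IsClosed D := by
    have hEq : D = {q : ℝ × ℝ | 0 ≤ q.2} ∩ {q | q.2 ≤ t₁} ∩ {q | cP q.2 ≤ q.1}
        ∩ {q | q.1 ≤ dP q.2} := by
      ext q; simp only [hD, mem_setOf_eq, mem_inter_iff]; tauto
    rw [hEq]
    exact (((isClosed_le continuous_const continuous_snd).inter
      (isClosed_le continuous_snd continuous_const)).inter
      (isClosed_le (hcPcont.comp continuous_snd) continuous_fst)).inter
      (isClosed_le continuous_fst (hdPcont.comp continuous_snd))
  obtain ⟨m, hm⟩ := (isCompact_Icc.image_of_continuousOn hcPcont.continuousOn).bddBelow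
  obtain ⟨M, hM⟩ := (isCompact_Icc.image_of_continuousOn hdPcont.continuousOn).bddAbove
  have hDcomp : IsCompact D := by
    refine IsCompact.of_isClosed_subset
      ((isCompact_Icc.prod isCompact_Icc) : IsCompact (Icc m M ×ˢ Icc (0:ℝ) t₁))
      hDclosed ?_
    rintro ⟨x, s⟩ ⟨h1, h2, h3, h4⟩
    exact ⟨⟨le_trans (hm ⟨s, ⟨h1, h2⟩, rfl⟩) h3, le_trans h4 (hM ⟨s, ⟨h1, h2⟩, rfl⟩)⟩, h1, h2⟩
  have hDsub : D ⊆ {q : ℝ × ℝ | 0 ≤ q.2 ∧ (q.2 : EReal) < T ∧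
      q.1 ∈ Icc (S.c q.2) (S.d q.2)} := by
    rintro ⟨x, s⟩ ⟨h1, h2, h3, h4⟩
    refine ⟨h1, hcoe s h2, ?_, ?_⟩
    · rwa [hcPeq s ⟨h1, h2⟩] at h3
    · rwa [hdPeq s ⟨h1, h2⟩] at h4
  have main : ∀ ε : ℝ, 0 < ε →
      S.y x₁ t₁ * Real.exp (-t₁ / ((n:ℝ) - 1)) ≤ M₀ + ε := by
    intro ε hε
    set δ : ℝ := ε / (t₁ + 1) with hδ
    have hδpos : 0 < δ := div_pos hε (by linarith)
    set g : ℝ × ℝ → ℝ :=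
      fun q => S.y q.1 q.2 * Real.exp (-q.2 / ((n:ℝ) - 1)) - δ * q.2 with hg
    have hgcont : ContinuousOn g D := by
      refine ContinuousOn.sub (ContinuousOn.mul (S.hy_cont.mono hDsub) ?_) ?_
      · exact (Real.continuous_exp.comp ((continuous_snd.neg).div_const _)).continuousOn
      · exact (continuous_const.mul continuous_snd).continuousOn
    have hq1D : (x₁, t₁) ∈ D := by
      refine ⟨ht0, le_rfl, ?_, ?_⟩
      · rw [hcPeq t₁ ⟨ht0, le_rfl⟩]; exact hx.1.le
      · rw [hdPeq t₁ ⟨ht0, le_rfl⟩]; exact hx.2.le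
    obtain ⟨q, hqD, hqmax⟩ := hDcomp.exists_isMaxOn ⟨(x₁, t₁), hq1D⟩ hgcont
    obtain ⟨hq0, hq1, hqc, hqd⟩ := hqD
    have hqT : ((q.2:ℝ):EReal) < T := hcoe _ hq1
    have hqc' : S.c q.2 ≤ q.1 := by rwa [hcPeq q.2 ⟨hq0, hq1⟩] at hqc
    have hqd' : q.1 ≤ S.d q.2 := by rwa [hdPeq q.2 ⟨hq0, hq1⟩] at hqd
    have key : g q ≤ M₀ := by
      by_contra hMlt
      push_neg at hMlt
      have hgq : g q = S.y q.1 q.2 * Real.exp (-q.2 / ((n:ℝ) - 1)) - δ * q.2 := rfl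
      have hexp_pos : 0 < Real.exp (-q.2 / ((n:ℝ) - 1)) := Real.exp_pos _
      have hypos : 0 < S.y q.1 q.2 := by
        rw [hgq] at hMlt
        nlinarith [mul_nonneg hδpos.le hq0]
      have hxc : S.c q.2 < q.1 := by
        rcases lt_or_eq_of_le hqc' with h | h
        · exact h
        · exfalso; rw [← h, S.hy_zero_c q.2 hq0 hqT] at hypos; exact lt_irrefl _ hypos
      have hxd : q.1 < S.d q.2 := by
        rcases lt_or_eq_of_le hqd' with h | h
        · exact h
        · exfalso; rw [h, S.hy_zero_d q.2 hq0 hqT] at hypos; exact lt_irrefl _ hypos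
      have hxIoo : q.1 ∈ Ioo (S.c q.2) (S.d q.2) := ⟨hxc, hxd⟩
      have htpos : 0 < q.2 := by
        rcases lt_or_eq_of_le hq0 with h | h
        · exact h
        · exfalso
          have hq20 : q.2 = 0 := h.symm
          have hgq0 : g q = S.y q.1 0 := by
            rw [hgq, hq20]; norm_num
          have hle := hM₀le q.1 (by rw [hq20] at hqc' hqd'; exact ⟨hqc', hqd'⟩)
          rw [hgq0] at hMlt
          linarith
      have hloc : IsLocalMax (fun x => S.y x q.2) q.1 := by
        have hnb : Ioo (S.c q.2) (S.d q.2) ∈ nhds q.1 := isOpen_Ioo.mem_nhds hxIoo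
        refine Filter.eventually_of_mem hnb fun x hxm => ?_
        have hxD : (x, q.2) ∈ D :=
          ⟨hq0, hq1, by rw [hcPeq q.2 ⟨hq0, hq1⟩]; exact hxm.1.le,
            by rw [hdPeq q.2 ⟨hq0, hq1⟩]; exact hxm.2.le⟩
        have hgle : g (x, q.2) ≤ g q := hqmax hxD
        have hgx : g (x, q.2) = S.y x q.2 * Real.exp (-q.2 / ((n:ℝ) - 1)) - δ * q.2 := rfl
        rw [hgx, hgq] at hgle
        have h2 : S.y x q.2 * Real.exp (-q.2/((n:ℝ)-1))
            ≤ S.y q.1 q.2 * Real.exp (-q.2/((n:ℝ)-1)) := by linarith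
        exact le_of_mul_le_mul_right h2 hexp_pos
      have hyx0 : S.yx q.1 q.2 = 0 :=
        hloc.hasDerivAt_eq_zero (S.hyx q.1 q.2 hq0 hqT hxIoo)
      have hyxx0 : S.yxx q.1 q.2 ≤ 0 := by
        by_contra hp
        push_neg at hp
        have hslope := hasDerivAt_iff_tendsto_slope.mp (S.hyxx q.1 q.2 hq0 hqT hxIoo)
        have hmono : Ioi q.1 ⊆ ({q.1} : Set ℝ)ᶜ := fun x hx => (ne_of_lt hx).symm
        have hev : ∀ᶠ x in nhdsWithin q.1 (Ioi q.1),
            0 < slope (fun x' => S.yx x' q.2) q.1 x :=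
          (hslope.mono_left (nhdsWithin_mono _ hmono)).eventually (eventually_gt_nhds hp)
        have hev2 : ∀ᶠ x in nhdsWithin q.1 (Ioi q.1), x ∈ Ioo q.1 (S.d q.2) :=
          Filter.eventually_of_mem (Ioo_mem_nhdsGT_of_mem ⟨le_refl _, hxd⟩) fun x hx => hx
        obtain ⟨b, hb, hbsub⟩ := mem_nhdsGT_iff_exists_Ioo_subset.mp (hev.and hev2)
        set b' : ℝ := (q.1 + b) / 2 with hb'
        have hbq : q.1 < b := hb
        have hb'1 : q.1 < b' := by rw [hb']; linarith
        have hb'2 : b' < b := by rw [hb']; linarith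
        have hsubIoo : Icc q.1 b' ⊆ Ioo (S.c q.2) (S.d q.2) := by
          intro x hxm
          rcases eq_or_lt_of_le hxm.1 with h | h
          · rw [← h]; exact hxIoo
          · exact ⟨hxc.trans h, (hbsub ⟨h, lt_of_le_of_lt hxm.2 hb'2⟩).2.2⟩
        have hcont' : ContinuousOn (fun x => S.y x q.2) (Icc q.1 b') := fun x hxm =>
          ((S.hyx x q.2 hq0 hqT (hsubIoo hxm)).continuousAt).continuousWithinAt
        have hderiv : ∀ x ∈ interior (Icc q.1 b'), 0 < deriv (fun x' => S.y x' q.2) x := by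
          rw [interior_Icc]
          intro x hxm
          have hxioo := hbsub ⟨hxm.1, hxm.2.trans hb'2⟩
          have hd := S.hyx x q.2 hq0 hqT (hsubIoo ⟨hxm.1.le, hxm.2.le⟩)
          rw [hd.deriv]
          have hslope_pos := hxioo.1
          rw [slope_def_field, hyx0, sub_zero] at hslope_pos
          have hden : 0 < x - q.1 := by linarith [hxm.1]
          by_contra hnp
          push_neg at hnp
          linarith [div_nonpos_of_nonpos_of_nonneg hnp hden.le]
        have hmono2 := strictMonoOn_of_deriv_pos (convex_Icc q.1 b') hcont' hderiv
        have hlt := hmono2 (left_mem_Icc.mpr hb'1.le) (right_mem_Icc.mpr hb'1.le) hb'1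
        have hbIoo := hsubIoo (right_mem_Icc.mpr hb'1.le)
        have hb'D : (b', q.2) ∈ D :=
          ⟨hq0, hq1, by rw [hcPeq q.2 ⟨hq0, hq1⟩]; exact hbIoo.1.le,
            by rw [hdPeq q.2 ⟨hq0, hq1⟩]; exact hbIoo.2.le⟩
        have hgle : g (b', q.2) ≤ g q := hqmax hb'D
        have hgb : g (b', q.2) = S.y b' q.2 * Real.exp (-q.2 / ((n:ℝ) - 1)) - δ * q.2 := rfl
        rw [hgb, hgq] at hgle
        nlinarith
      -- time direction
      have hstrip : {s : ℝ | 0 ≤ s ∧ (s : EReal) < T} ∈ nhds q.2 := by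
        have hopen : IsOpen ({s : ℝ | 0 < s} ∩ {s : ℝ | (s:EReal) < T}) :=
          (isOpen_lt continuous_const continuous_id).inter
            (isOpen_Iio.preimage continuous_coe_real_ereal)
        refine mem_of_superset (hopen.mem_nhds ⟨htpos, hqT⟩) ?_
        rintro s ⟨h1, h2⟩; exact ⟨h1.le, h2⟩
      have hccA : ContinuousAt S.c q.2 :=
        (S.hc_cont q.2 ⟨hq0, hqT⟩).continuousAt hstrip
      have hdcA : ContinuousAt S.d q.2 :=
        (S.hd_cont q.2 ⟨hq0, hqT⟩).continuousAt hstrip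
      have hevc : ∀ᶠ s in nhds q.2, S.c s < q.1 := hccA.eventually_lt_const hxc
      have hevd : ∀ᶠ s in nhds q.2, q.1 < S.d s := hdcA.eventually_const_lt hxd
      have hevp : ∀ᶠ s in nhds q.2, 0 < s := eventually_gt_nhds htpos
      have hevD : ∀ᶠ s in nhdsWithin q.2 (Iio q.2), (q.1, s) ∈ D := by
        filter_upwards [((hevc.and (hevd.and hevp)).filter_mono nhdsWithin_le_nhds),
          self_mem_nhdsWithin] with s hs hs2
        obtain ⟨h1, h2, h3⟩ := hs
        have hs1 : s ≤ t₁ := le_trans (le_of_lt hs2) hq1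
        exact ⟨h3.le, hs1, by rw [hcPeq s ⟨h3.le, hs1⟩]; exact h1.le,
          by rw [hdPeq s ⟨h3.le, hs1⟩]; exact h2.le⟩
      have hde : HasDerivAt (fun s : ℝ => Real.exp (-s / ((n:ℝ) - 1)))
          (Real.exp (-q.2 / ((n:ℝ) - 1)) * (-1 / ((n:ℝ) - 1))) q.2 := by
        have h1 : HasDerivAt (fun s : ℝ => -s / ((n:ℝ) - 1)) (-1 / ((n:ℝ) - 1)) q.2 :=
          ((hasDerivAt_id q.2).neg).div_const _
        exact h1.exp
      have hyt' := S.hyt q.1 q.2 hq0 hqT hxIoo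
      have hh : HasDerivAt (fun s : ℝ => S.y q.1 s * Real.exp (-s / ((n:ℝ) - 1)) - δ * s)
          (S.yt q.1 q.2 * Real.exp (-q.2 / ((n:ℝ) - 1))
            + S.y q.1 q.2 * (Real.exp (-q.2 / ((n:ℝ) - 1)) * (-1 / ((n:ℝ) - 1)))
            - δ * 1) q.2 :=
        (hyt'.mul hde).sub ((hasDerivAt_id q.2).const_mul δ)
      have hDh : 0 ≤ S.yt q.1 q.2 * Real.exp (-q.2/((n:ℝ)-1))
          + S.y q.1 q.2 * (Real.exp (-q.2/((n:ℝ)-1)) * (-1 / ((n:ℝ) - 1))) - δ * 1 := by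
        have hslope2 := hasDerivAt_iff_tendsto_slope.mp hh
        have hmono : Iio q.2 ⊆ ({q.2} : Set ℝ)ᶜ := fun s hs => ne_of_lt hs
        refine ge_of_tendsto (hslope2.mono_left (nhdsWithin_mono _ hmono)) ?_
        filter_upwards [hevD, self_mem_nhdsWithin] with s hsD hs2
        have hgles : g (q.1, s) ≤ g q := hqmax hsD
        have hgs : g (q.1, s) = S.y q.1 s * Real.exp (-s / ((n:ℝ) - 1)) - δ * s := rfl
        rw [hgs, hgq] at hgles
        simp only [slope_def_field]
        rw [← neg_div_neg_eq]
        have hden : (0:ℝ) ≤ -(s - q.2) := by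
          have : s < q.2 := hs2
          linarith
        exact div_nonneg (by linarith) hden
      have hH := S.hH_pos q.1 q.2 hq0 hqT hxIoo
      have hIM := S.hIMCF q.1 q.2 hq0 hqT hxIoo
      rw [hyx0] at hH hIM
      norm_num [Real.sqrt_one] at hH hIM
      have hHy : ((n:ℝ)-1)/S.y q.1 q.2 ≤ ((n:ℝ)-1)/S.y q.1 q.2 - S.yxx q.1 q.2 := by linarith
      have hfrac : 0 < ((n:ℝ)-1)/S.y q.1 q.2 := div_pos (by linarith) hypos
      have hyt_le : S.yt q.1 q.2 ≤ S.y q.1 q.2 / ((n:ℝ)-1) := by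
        have h1 : 1/(((n:ℝ)-1)/S.y q.1 q.2 - S.yxx q.1 q.2)
            ≤ 1/(((n:ℝ)-1)/S.y q.1 q.2) := one_div_le_one_div_of_le hfrac hHy
        have h2 : 1/(((n:ℝ)-1)/S.y q.1 q.2) = S.y q.1 q.2 / ((n:ℝ)-1) := one_div_div _ _
        rw [hIM, ← one_div]
        calc 1/(((n:ℝ)-1)/S.y q.1 q.2 - S.yxx q.1 q.2)
            ≤ 1/(((n:ℝ)-1)/S.y q.1 q.2) := h1
          _ = S.y q.1 q.2 / ((n:ℝ)-1) := h2
      have hmul : S.yt q.1 q.2 * Real.exp (-q.2/((n:ℝ)-1))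
          ≤ (S.y q.1 q.2 / ((n:ℝ)-1)) * Real.exp (-q.2/((n:ℝ)-1)) :=
        mul_le_mul_of_nonneg_right hyt_le hexp_pos.le
      have hring : S.y q.1 q.2 * (Real.exp (-q.2/((n:ℝ)-1)) * (-1 / ((n:ℝ) - 1)))
          = -((S.y q.1 q.2 / ((n:ℝ)-1)) * Real.exp (-q.2/((n:ℝ)-1))) := by ring
      rw [hring] at hDh
      linarith
    have hfin : g (x₁, t₁) ≤ g q := hqmax hq1D
    have hgx1 : g (x₁, t₁) = S.y x₁ t₁ * Real.exp (-t₁ / ((n:ℝ) - 1)) - δ * t₁ := rfl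
    rw [hgx1] at hfin
    have hδt : δ * t₁ ≤ ε := by
      rw [hδ, div_mul_eq_mul_div, div_le_iff₀ (by linarith : (0:ℝ) < t₁ + 1)]
      nlinarith
    clear_value g δ M₀
    linarith [hfin, key, hδt, hδpos]
  have hmain : S.y x₁ t₁ * Real.exp (-t₁/((n:ℝ)-1)) ≤ M₀ := le_of_forall_pos_le_add main
  have hee : Real.exp (-t₁/((n:ℝ)-1)) * Real.exp (t₁/((n:ℝ)-1)) = 1 := by
    rw [← Real.exp_add]
    have harg : -t₁/((n:ℝ)-1) + t₁/((n:ℝ)-1) = 0 := by ring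
    rw [harg, Real.exp_zero]
  have h2 := mul_le_mul_of_nonneg_right hmain (Real.exp_pos (t₁/((n:ℝ)-1))).le
  rw [mul_assoc, hee, mul_one] at h2
  exact h2

end AuxLemmas
/-- Corollary 5.4: at the cap boundaries `α(t)`, `β(t)` the graph has a critical point with
nonpositive second derivative, and the mean curvature there satisfies
`H ≥ (n-1)/y ≥ (n-1) e^{-t/(n-1)} / max_{N₀} u`. -/
theorem bridge_boundary_H_bound {n : ℕ} {T : EReal} (S : IMCFGraphSetup n T) :
    ∀ t : ℝ, 0 ≤ t → (t : EReal) < T →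
      (S.yx (S.alpha t) t = 0 ∧ S.yxx (S.alpha t) t ≤ 0 ∧
        ((n : ℝ) - 1) / S.y (S.alpha t) t ≤ S.H (S.alpha t) t ∧
        ((n : ℝ) - 1) * Real.exp (-t / ((n : ℝ) - 1)) /
            sSup ((fun x' => S.y x' 0) '' Icc (S.c 0) (S.d 0)) ≤
          ((n : ℝ) - 1) / S.y (S.alpha t) t) ∧
      (S.yx (S.beta t) t = 0 ∧ S.yxx (S.beta t) t ≤ 0 ∧
        ((n : ℝ) - 1) / S.y (S.beta t) t ≤ S.H (S.beta t) t ∧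
        ((n : ℝ) - 1) * Real.exp (-t / ((n : ℝ) - 1)) /
            sSup ((fun x' => S.y x' 0) '' Icc (S.c 0) (S.d 0)) ≤
          ((n : ℝ) - 1) / S.y (S.beta t) t) := by
  intro t ht0 htT
  obtain ⟨hαIoo, hα0, hα2⟩ := alpha_spec S ht0 htT
  obtain ⟨hβIoo, hβ0, hβ2⟩ := beta_spec S ht0 htT
  have hn1 : (1:ℝ) ≤ (n:ℝ) - 1 := aux_one_le S
  have hyα : 0 < S.y (S.alpha t) t := S.hy_pos _ t ht0 htT hαIoo
  have hyβ : 0 < S.y (S.beta t) t := S.hy_pos _ t ht0 htT hβIoo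
  have hsupα := sup_bound S ht0 htT hαIoo
  have hsupβ := sup_bound S ht0 htT hβIoo
  have hfinal : ∀ x : ℝ, 0 < S.y x t →
      S.y x t ≤ sSup ((fun x' => S.y x' 0) '' Icc (S.c 0) (S.d 0)) *
        Real.exp (t/((n:ℝ)-1)) →
      ((n:ℝ)-1) * Real.exp (-t/((n:ℝ)-1)) /
          sSup ((fun x' => S.y x' 0) '' Icc (S.c 0) (S.d 0))
        ≤ ((n:ℝ)-1) / S.y x t := by
    intro x hy hsup
    have hepos := Real.exp_pos (t/((n:ℝ)-1))
    have heneg := Real.exp_pos (-t/((n:ℝ)-1))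
    have hee : Real.exp (-t/((n:ℝ)-1)) * Real.exp (t/((n:ℝ)-1)) = 1 := by
      rw [← Real.exp_add]
      have harg : -t/((n:ℝ)-1) + t/((n:ℝ)-1) = 0 := by ring
      rw [harg, Real.exp_zero]
    set M₀ := sSup ((fun x' => S.y x' 0) '' Icc (S.c 0) (S.d 0)) with hM
    have hM0pos : 0 < M₀ := by nlinarith
    rw [div_le_div_iff₀ hM0pos hy]
    have h1 : Real.exp (-t/((n:ℝ)-1)) * S.y x t
        ≤ Real.exp (-t/((n:ℝ)-1)) * (M₀ * Real.exp (t/((n:ℝ)-1))) :=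
      mul_le_mul_of_nonneg_left hsup heneg.le
    have h2 : Real.exp (-t/((n:ℝ)-1)) * (M₀ * Real.exp (t/((n:ℝ)-1))) = M₀ := by
      rw [mul_comm M₀, ← mul_assoc, hee, one_mul]
    nlinarith
  exact ⟨⟨hα0, hα2, crit_H_bound S hα0 hα2, hfinal _ hyα hsupα⟩,
    hβ0, hβ2, crit_H_bound S hβ0 hβ2, hfinal _ hyβ hsupβ⟩
end

section
/- Let n ≥ 2 be an integer and let y : (a,b) → (0,∞) be a C² function satisfying y''(x)/(1+y'(x)²) < (n−1)/y(x) for all x ∈ (a,b). Let a₀ ∈ (a,b) with y'(a₀) = 0. Then for every x ∈ (a,b) such that either x ≥ a₀ and y' ≥ 0 on [a₀,x], or x ≤ a₀ and y' ≤ 0 on [x,a₀], one has 1 + y'(x)² ≤ (y(x)/y(a₀))^{2(n−1)}. -/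
/-!
Following Angenent, set `φ = log (1 + y'²) - 2(n-1) log y` (`angenentPotential` with
`κ = n - 1`). Its derivative is `2 y' (y''/(1 + y'²) - (n-1)/y)`, and the mean-convexity
hypothesis makes the second factor negative, so `φ` decreases where `y' ≥ 0` and increases where
`y' ≤ 0`. Hence `φ(x) ≤ φ(a₀) = -2(n-1) log y(a₀)`, which is the claimed bound after
exponentiating.
-/

open Set Real

noncomputable def angenentPotential (κ : ℝ) (y y' : ℝ → ℝ) (t : ℝ) : ℝ :=
  log (1 + y' t ^ 2) - 2 * κ * log (y t)

section AngenentPotential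

variable {κ : ℝ} {y y' y'' : ℝ → ℝ}

theorem hasDerivAt_angenentPotential {t : ℝ} (hy : 0 < y t) (hd : HasDerivAt y (y' t) t)
    (hdd : HasDerivAt y' (y'' t) t) :
    HasDerivAt (angenentPotential κ y y')
      (2 * y' t * (y'' t / (1 + y' t ^ 2) - κ / y t)) t := by
  have hsq : HasDerivAt (fun s => 1 + y' s ^ 2) (2 * y' t * y'' t) t := by
    simpa [mul_comm, mul_assoc, mul_left_comm] using (hdd.pow 2).const_add 1
  refine ((hsq.log (by positivity)).sub ((hd.log hy.ne').const_mul (2 * κ))).congr_deriv ?_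
  field_simp

theorem continuousOn_angenentPotential {s : Set ℝ} (hy : ∀ t ∈ s, 0 < y t)
    (hd : ∀ t ∈ s, HasDerivAt y (y' t) t) (hdd : ∀ t ∈ s, HasDerivAt y' (y'' t) t) :
    ContinuousOn (angenentPotential κ y y') s := fun t ht =>
  (hasDerivAt_angenentPotential (hy t ht) (hd t ht) (hdd t ht)).continuousAt.continuousWithinAt

theorem antitoneOn_angenentPotential {s : Set ℝ} (hs : Convex ℝ s) (hy : ∀ t ∈ s, 0 < y t)
    (hd : ∀ t ∈ s, HasDerivAt y (y' t) t) (hdd : ∀ t ∈ s, HasDerivAt y' (y'' t) t)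
    (hH : ∀ t ∈ s, y'' t / (1 + y' t ^ 2) ≤ κ / y t) (hsign : ∀ t ∈ s, 0 ≤ y' t) :
    AntitoneOn (angenentPotential κ y y') s := by
  refine antitoneOn_of_hasDerivWithinAt_nonpos
    (f' := fun t => 2 * y' t * (y'' t / (1 + y' t ^ 2) - κ / y t)) hs
    (continuousOn_angenentPotential hy hd hdd) (fun t ht => ?_) (fun t ht => ?_)
  · have ht := interior_subset ht
    exact (hasDerivAt_angenentPotential (hy t ht) (hd t ht) (hdd t ht)).hasDerivWithinAt
  · have ht := interior_subset ht
    exact mul_nonpos_of_nonneg_of_nonpos (by linarith [hsign t ht]) (by linarith [hH t ht])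

theorem monotoneOn_angenentPotential {s : Set ℝ} (hs : Convex ℝ s) (hy : ∀ t ∈ s, 0 < y t)
    (hd : ∀ t ∈ s, HasDerivAt y (y' t) t) (hdd : ∀ t ∈ s, HasDerivAt y' (y'' t) t)
    (hH : ∀ t ∈ s, y'' t / (1 + y' t ^ 2) ≤ κ / y t) (hsign : ∀ t ∈ s, y' t ≤ 0) :
    MonotoneOn (angenentPotential κ y y') s := by
  refine monotoneOn_of_hasDerivWithinAt_nonneg
    (f' := fun t => 2 * y' t * (y'' t / (1 + y' t ^ 2) - κ / y t)) hs
    (continuousOn_angenentPotential hy hd hdd) (fun t ht => ?_) (fun t ht => ?_)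
  · have ht := interior_subset ht
    exact (hasDerivAt_angenentPotential (hy t ht) (hd t ht) (hdd t ht)).hasDerivWithinAt
  · have ht := interior_subset ht
    exact mul_nonneg_of_nonpos_of_nonpos (by linarith [hsign t ht]) (by linarith [hH t ht])

theorem one_add_sq_le_rpow_of_angenentPotential_le {x a₀ : ℝ} (hyx : 0 < y x)
    (hya₀ : 0 < y a₀) (hcrit : y' a₀ = 0)
    (h : angenentPotential κ y y' x ≤ angenentPotential κ y y' a₀) :
    1 + y' x ^ 2 ≤ (y x / y a₀) ^ (2 * κ) := by
  have hlog : log (1 + y' x ^ 2) ≤ log ((y x / y a₀) ^ (2 * κ)) := by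
    rw [log_rpow (by positivity), log_div hyx.ne' hya₀.ne']
    simp only [angenentPotential, hcrit, ne_eq, OfNat.ofNat_ne_zero, not_false_eq_true, zero_pow,
      add_zero, log_one, zero_sub] at h
    linarith
  exact (log_le_log_iff (by positivity) (by positivity)).mp hlog

end AngenentPotential

theorem integrated_gradient_bound_general
    (n : ℕ) (hn : 2 ≤ n) (a b a₀ : ℝ)
    (y y' y'' : ℝ → ℝ)
    (hy_pos : ∀ x ∈ Ioo a b, 0 < y x)
    (hd : ∀ x ∈ Ioo a b, HasDerivAt y (y' x) x)
    (hdd : ∀ x ∈ Ioo a b, HasDerivAt y' (y'' x) x)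
    (hH : ∀ x ∈ Ioo a b, y'' x / (1 + y' x ^ 2) < ((n : ℝ) - 1) / y x)
    (ha₀ : a₀ ∈ Ioo a b) (hcrit : y' a₀ = 0) :
    ∀ x ∈ Ioo a b,
      ((a₀ ≤ x ∧ ∀ s ∈ Icc a₀ x, 0 ≤ y' s) ∨ (x ≤ a₀ ∧ ∀ s ∈ Icc x a₀, y' s ≤ 0)) →
      1 + y' x ^ 2 ≤ (y x / y a₀) ^ (2 * (n - 1)) := by
  intro x hx hcase
  have hH' : ∀ t ∈ Ioo a b, y'' t / (1 + y' t ^ 2) ≤ ((n : ℝ) - 1) / y t :=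
    fun t ht => (hH t ht).le
  have key :
      angenentPotential ((n : ℝ) - 1) y y' x ≤ angenentPotential ((n : ℝ) - 1) y y' a₀ := by
    rcases hcase with ⟨hax, hsign⟩ | ⟨hxa, hsign⟩
    · have hsub : Icc a₀ x ⊆ Ioo a b := Icc_subset_Ioo ha₀.1 hx.2
      exact antitoneOn_angenentPotential (convex_Icc a₀ x) (fun t ht => hy_pos t (hsub ht))
        (fun t ht => hd t (hsub ht)) (fun t ht => hdd t (hsub ht))
        (fun t ht => hH' t (hsub ht)) hsign (left_mem_Icc.2 hax) (right_mem_Icc.2 hax) hax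
    · have hsub : Icc x a₀ ⊆ Ioo a b := Icc_subset_Ioo hx.1 ha₀.2
      exact monotoneOn_angenentPotential (convex_Icc x a₀) (fun t ht => hy_pos t (hsub ht))
        (fun t ht => hd t (hsub ht)) (fun t ht => hdd t (hsub ht))
        (fun t ht => hH' t (hsub ht)) hsign (left_mem_Icc.2 hxa) (right_mem_Icc.2 hxa) hxa
  have hexp : ((2 * (n - 1) : ℕ) : ℝ) = 2 * ((n : ℝ) - 1) := by
    push_cast [Nat.cast_sub (by omega : 1 ≤ n)]; ring
  rw [← rpow_natCast (y x / y a₀), hexp]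
  exact one_add_sq_le_rpow_of_angenentPotential_le (hy_pos x hx) (hy_pos a₀ ha₀) hcrit key

/-- The integrated gradient bound (following Angenent) used in Case II of the proof of
Corollary 6.2: if `y : (a,b) → (0,∞)` is `C²` with `y''/(1+y'²) < (n-1)/y` (positivity of
the mean curvature of the generated hypersurface of revolution) and `y'(a₀) = 0`, then at
any `x` reachable from `a₀` through a region where `y'` has the appropriate sign,
`1 + y'(x)² ≤ (y(x)/y(a₀))^{2(n-1)}`. -/
theorem integrated_gradient_bound
    (n : ℕ) (hn : 2 ≤ n) (a b a₀ : ℝ)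
    (y y' y'' : ℝ → ℝ)
    (hy_pos : ∀ x ∈ Ioo a b, 0 < y x)
    (hd : ∀ x ∈ Ioo a b, HasDerivAt y (y' x) x)
    (hdd : ∀ x ∈ Ioo a b, HasDerivAt y' (y'' x) x)
    (hdd_cont : ContinuousOn y'' (Ioo a b))
    (hH : ∀ x ∈ Ioo a b, y'' x / (1 + y' x ^ 2) < ((n : ℝ) - 1) / y x)
    (ha₀ : a₀ ∈ Ioo a b) (hcrit : y' a₀ = 0) :
    ∀ x ∈ Ioo a b,
      ((a₀ ≤ x ∧ ∀ s ∈ Icc a₀ x, 0 ≤ y' s) ∨ (x ≤ a₀ ∧ ∀ s ∈ Icc x a₀, y' s ≤ 0)) →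
      1 + y' x ^ 2 ≤ (y x / y a₀) ^ (2 * (n - 1)) :=
  integrated_gradient_bound_general n hn a b a₀ y y' y'' hy_pos hd hdd hH ha₀ hcrit
end

section
/- Let X be a topological space, T > 0, and let (E_t)_{t∈[0,T)} be a family of open subsets of X such that closure(E_{t₁}) ⊆ E_{t₂} whenever 0 ≤ t₁ < t₂ < T. Fix t₀ ∈ [0,T), and suppose S ⊆ X satisfies ⋂_{t∈(t₀,T)} E_t ⊆ S and S ∖ E₀ ⊆ ⋃_{t∈[0,T)} ∂E_t (where ∂E_t denotes the topological boundary of E_t). Then ⋂_{t∈(t₀,T)} E_t = closure(E_{t₀}). -/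
open Set Filter

/-! The inclusion `closure (E t₀) ⊆ ⋂_{t > t₀} E t` is immediate from the nesting. Conversely, a
point `x` of the intersection lies in `S`; if it is not in `E 0`, it lies on some frontier
`∂E_t`. Since `E t` is open, `x ∉ E t`, whereas `x ∈ E s` for every `s ∈ (t₀, t)` would put `x` in
`closure (E s) ⊆ E t`; hence `t ≤ t₀` and `x ∈ closure (E t) ⊆ closure (E t₀)`. -/

section NestedFamily

variable {X : Type*} [TopologicalSpace X] {T : ℝ} {E : ℝ → Set X}

theorem closure_subset_closure_of_nested
    (hnest : ∀ t₁ t₂ : ℝ, 0 ≤ t₁ → t₁ < t₂ → t₂ < T → closure (E t₁) ⊆ E t₂)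
    {t₁ t₂ : ℝ} (h0 : 0 ≤ t₁) (h : t₁ ≤ t₂) (hT : t₂ < T) :
    closure (E t₁) ⊆ closure (E t₂) := by
  rcases h.eq_or_lt with rfl | hlt
  · exact subset_rfl
  · exact (hnest t₁ t₂ h0 hlt hT).trans subset_closure

theorem closure_subset_biInter_Ioo_of_nested
    (hnest : ∀ t₁ t₂ : ℝ, 0 ≤ t₁ → t₁ < t₂ → t₂ < T → closure (E t₁) ⊆ E t₂)
    {t₀ : ℝ} (h0 : 0 ≤ t₀) :
    closure (E t₀) ⊆ ⋂ t ∈ Ioo t₀ T, E t :=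
  subset_iInter₂ fun t ht ↦ hnest t₀ t h0 ht.1 ht.2

theorem le_of_mem_biInter_Ioo_of_mem_frontier
    (hnest : ∀ t₁ t₂ : ℝ, 0 ≤ t₁ → t₁ < t₂ → t₂ < T → closure (E t₁) ⊆ E t₂)
    {t₀ t : ℝ} (h0 : 0 ≤ t₀) (htT : t < T) (hopen : IsOpen (E t)) {x : X}
    (hx : x ∈ ⋂ s ∈ Ioo t₀ T, E s) (hxt : x ∈ frontier (E t)) :
    t ≤ t₀ := by
  by_contra! hlt
  obtain ⟨s, hs₀, hst⟩ := exists_between hlt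
  have hxs : x ∈ E s := mem_iInter₂.mp hx s ⟨hs₀, hst.trans htT⟩
  have hxE : x ∈ E t := hnest s t (h0.trans hs₀.le) hst htT (subset_closure hxs)
  rw [hopen.frontier_eq] at hxt
  exact hxt.2 hxE

end NestedFamily

theorem nested_family_intersection_eq_closure_general
    {X : Type*} [TopologicalSpace X] (T : ℝ)
    (E : ℝ → Set X)
    (hopen : ∀ t ∈ Ico (0:ℝ) T, IsOpen (E t))
    (hnest : ∀ t₁ t₂ : ℝ, 0 ≤ t₁ → t₁ < t₂ → t₂ < T → closure (E t₁) ⊆ E t₂)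
    (t₀ : ℝ) (ht₀ : t₀ ∈ Ico (0:ℝ) T)
    (S : Set X)
    (h1 : (⋂ t ∈ Ioo t₀ T, E t) ⊆ S)
    (h2 : S \ E 0 ⊆ ⋃ t ∈ Ico (0:ℝ) T, frontier (E t)) :
    (⋂ t ∈ Ioo t₀ T, E t) = closure (E t₀) := by
  obtain ⟨ht₀0, ht₀T⟩ := ht₀
  refine Subset.antisymm (fun x hx ↦ ?_) (closure_subset_biInter_Ioo_of_nested hnest ht₀0)
  by_cases hx0 : x ∈ E 0
  · exact closure_subset_closure_of_nested hnest le_rfl ht₀0 ht₀T (subset_closure hx0)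
  · obtain ⟨t, ht, hxt⟩ := mem_iUnion₂.mp (h2 ⟨h1 hx, hx0⟩)
    have htt₀ : t ≤ t₀ :=
      le_of_mem_biInter_Ioo_of_mem_frontier hnest ht₀0 ht.2 (hopen t ht) hx hxt
    exact closure_subset_closure_of_nested hnest ht.1 htt₀ ht₀T (frontier_subset_closure hxt)

/-- The first step in the proof of Theorem 9.2: for a nested family of open sets
`(E_t)_{t ∈ [0,T)}` with `closure (E t₁) ⊆ E t₂` for `t₁ < t₂`, if a set `S` contains
`⋂_{t ∈ (t₀,T)} E t` and `S \ E 0` is covered by the boundaries `∂E_t`, then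
`⋂_{t ∈ (t₀,T)} E t = closure (E t₀)`. -/
theorem nested_family_intersection_eq_closure
    {X : Type*} [TopologicalSpace X] (T : ℝ) (hT : 0 < T)
    (E : ℝ → Set X)
    (hopen : ∀ t ∈ Ico (0:ℝ) T, IsOpen (E t))
    (hnest : ∀ t₁ t₂ : ℝ, 0 ≤ t₁ → t₁ < t₂ → t₂ < T → closure (E t₁) ⊆ E t₂)
    (t₀ : ℝ) (ht₀ : t₀ ∈ Ico (0:ℝ) T)
    (S : Set X)
    (h1 : (⋂ t ∈ Ioo t₀ T, E t) ⊆ S)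
    (h2 : S \ E 0 ⊆ ⋃ t ∈ Ico (0:ℝ) T, frontier (E t)) :
    (⋂ t ∈ Ioo t₀ T, E t) = closure (E t₀) :=
  nested_family_intersection_eq_closure_general T E hopen hnest t₀ ht₀ S h1 h2
end

section
/- Let ℓ > 0 and c ∈ (0,1), and let y : [−(ℓ+2), ℓ+2] → [0,∞) be an even function (y(−x) = y(x)) with y((ℓ+1)c) = c and y(ℓ+1) = 1, which is differentiable at (ℓ+1)c with y'((ℓ+1)c) = 0. Let E = {(x,z) ∈ ℝ² : |x| ≤ ℓ+2 and |z| ≤ y(x)}. Then E is not star-shaped with respect to any of its points: there is no p ∈ E such that for every q ∈ E the segment [p,q] is contained in E. -/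
/-!
Let `p` be a star centre of `E`; by the symmetry `x ↦ -x` we may take `p.1 ≤ 0`. The segments
from `p` to `(ℓ+1, 1)` and `(ℓ+1, -1)` stay in `E`, and their average shows that right of
`a = (ℓ+1)c` the graph of `y` lies above the line through `(a, c)` of slope `1 / (ℓ+1-p.1) > 0`.
This contradicts `y'(a) = 0`.
-/

open Set Filter Topology

theorem le_deriv_of_eventually_linear_le {f : ℝ → ℝ} {f' k a : ℝ} (hf : HasDerivAt f f' a)
    (hk : ∀ᶠ x in 𝓝[>] a, f a + k * (x - a) ≤ f x) : k ≤ f' := by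
  by_contra! hlt
  obtain ⟨x, hslope, hle, hx⟩ :=
    ((hf.hasDerivWithinAt.liminf_right_slope_le hlt).and_eventually
      (hk.and self_mem_nhdsWithin)).exists
  rw [slope_def_field, div_lt_iff₀ (sub_pos.2 hx)] at hslope
  linarith

def graphRegion (L : ℝ) (y : ℝ → ℝ) : Set (ℝ × ℝ) := {q | |q.1| ≤ L ∧ |q.2| ≤ y q.1}

theorem starConvex_graphRegion_neg_fst {L : ℝ} {y : ℝ → ℝ} (heven : ∀ x, y (-x) = y x)
    {p : ℝ × ℝ} (hp : StarConvex ℝ p (graphRegion L y)) :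
    StarConvex ℝ (-p.1, p.2) (graphRegion L y) := by
  have hpre : (LinearMap.prodMap (-LinearMap.id) LinearMap.id : ℝ × ℝ →ₗ[ℝ] ℝ × ℝ) ⁻¹'
      graphRegion L y = graphRegion L y := by
    ext q; simp [graphRegion, heven]
  rw [← hpre]
  apply StarConvex.linear_preimage
  simpa using hp

/-- Averaging the segments from a star centre to `(b, w)` and `(b, -w)` cancels the
height of the centre. -/
theorem mul_le_of_starConvex_graphRegion {L : ℝ} {y : ℝ → ℝ} {p : ℝ × ℝ}
    (hp : StarConvex ℝ p (graphRegion L y)) {b w : ℝ} (hb : |b| ≤ L) (hw : |w| ≤ y b)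
    {u : ℝ} (hu : u ∈ Icc (0 : ℝ) 1) : u * w ≤ y (p.1 + u * (b - p.1)) := by
  have hmem : ∀ z : ℝ, |z| = |w| → |(1 - u) * p.2 + u * z| ≤ y (p.1 + u * (b - p.1)) := by
    intro z hz
    have := (hp (y := (b, z)) ⟨hb, hz ▸ hw⟩ (sub_nonneg.2 hu.2) hu.1 (by ring)).2
    simp only [Prod.fst_add, Prod.snd_add, Prod.smul_fst, Prod.smul_snd, smul_eq_mul] at this
    convert this using 2; ring
  have h₁ := hmem w rfl
  have h₂ := hmem (-w) (abs_neg w)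
  linarith [le_abs_self ((1 - u) * p.2 + u * w), neg_abs_le ((1 - u) * p.2 + u * -w)]

theorem not_starConvex_graphRegion_of_fst_nonpos {L b c : ℝ} {y : ℝ → ℝ} (hb : 0 < b)
    (hbL : b ≤ L) (hc : c ∈ Ioo (0 : ℝ) 1) (hyc : y (b * c) = c) (hyb : y b = 1)
    (hderiv : HasDerivAt y 0 (b * c)) {p : ℝ × ℝ} (hp : p.1 ≤ 0) :
    ¬ StarConvex ℝ p (graphRegion L y) := by
  intro hstar
  set d := b - p.1
  have hd : 0 < d := by linarith
  have hlin : ∀ x ∈ Ioc (b * c) b, y (b * c) + d⁻¹ * (x - b * c) ≤ y x := by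
    intro x ⟨hx₀, hx₁⟩
    have hbc : 0 < b * c := mul_pos hb hc.1
    have hu : (x - p.1) / d ∈ Icc (0 : ℝ) 1 :=
      ⟨div_nonneg (by linarith) hd.le, (div_le_one hd).2 (by linarith)⟩
    have hx := mul_le_of_starConvex_graphRegion hstar (abs_le.2 ⟨by linarith, hbL⟩)
      (by rw [hyb, abs_one]) hu
    rw [mul_one, div_mul_cancel₀ _ hd.ne', add_sub_cancel] at hx
    -- the segment meets the line `x = b c` at height `(b c - p.1) / d ≥ c`
    have hc_le : c * d ≤ b * c - p.1 := by nlinarith [hc.2]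
    calc y (b * c) + d⁻¹ * (x - b * c) = (c * d + (x - b * c)) / d := by
          rw [hyc]; field_simp
      _ ≤ (x - p.1) / d := by gcongr; linarith
      _ ≤ y x := hx
  have hslope := le_deriv_of_eventually_linear_le hderiv <|
    eventually_of_mem (Ioc_mem_nhdsGT (mul_lt_of_lt_one_right hb hc.2)) hlin
  exact (inv_pos.2 hd).not_ge hslope

theorem neck_region_not_star_shaped_general
    (ℓ c : ℝ) (hℓ : 0 < ℓ) (hc : c ∈ Ioo (0:ℝ) 1)
    (y : ℝ → ℝ)
    (heven : ∀ x : ℝ, y (-x) = y x)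
    (hyc : y ((ℓ + 1) * c) = c)
    (hy1 : y (ℓ + 1) = 1)
    (hderiv : HasDerivAt y 0 ((ℓ + 1) * c)) :
    ¬ ∃ p ∈ {q : ℝ × ℝ | |q.1| ≤ ℓ + 2 ∧ |q.2| ≤ y q.1},
      ∀ q ∈ {q : ℝ × ℝ | |q.1| ≤ ℓ + 2 ∧ |q.2| ≤ y q.1},
        segment ℝ p q ⊆ {q : ℝ × ℝ | |q.1| ≤ ℓ + 2 ∧ |q.2| ≤ y q.1} := by
  rintro ⟨p, -, hseg⟩
  have hstar : StarConvex ℝ p (graphRegion (ℓ + 2) y) := starConvex_iff_segment_subset.2 hseg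
  have hnot {p' : ℝ × ℝ} (hp' : p'.1 ≤ 0) : ¬ StarConvex ℝ p' (graphRegion (ℓ + 2) y) :=
    not_starConvex_graphRegion_of_fst_nonpos (by linarith) (by linarith) hc hyc hy1 hderiv hp'
  rcases le_or_gt p.1 0 with hp | hp
  · exact hnot hp hstar
  · exact hnot (neg_nonpos.2 hp.le) (starConvex_graphRegion_neg_fst heven hstar)

/-- The non-star-shapedness claim of Appendix A.2: for the even generating graph `y` of the
constructed surface (value `c` with horizontal tangent at `(ℓ+1)c`, value `1` at `ℓ+1`),
the planar region `E = {(x,z) : |x| ≤ ℓ+2, |z| ≤ y(x)}` is not star-shaped with respect to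
any of its points. -/
theorem neck_region_not_star_shaped
    (ℓ c : ℝ) (hℓ : 0 < ℓ) (hc : c ∈ Ioo (0:ℝ) 1)
    (y : ℝ → ℝ)
    (heven : ∀ x : ℝ, y (-x) = y x)
    (hnonneg : ∀ x ∈ Icc (-(ℓ + 2)) (ℓ + 2), 0 ≤ y x)
    (hyc : y ((ℓ + 1) * c) = c)
    (hy1 : y (ℓ + 1) = 1)
    (hderiv : HasDerivAt y 0 ((ℓ + 1) * c)) :
    ¬ ∃ p ∈ {q : ℝ × ℝ | |q.1| ≤ ℓ + 2 ∧ |q.2| ≤ y q.1},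
      ∀ q ∈ {q : ℝ × ℝ | |q.1| ≤ ℓ + 2 ∧ |q.2| ≤ y q.1},
        segment ℝ p q ⊆ {q : ℝ × ℝ | |q.1| ≤ ℓ + 2 ∧ |q.2| ≤ y q.1} :=
  neck_region_not_star_shaped_general ℓ c hℓ hc y heven hyc hy1 hderiv
end

section
/- For every integer n ≥ 2 there exist real numbers a < α < β < b and a C² function y : (a,b) → (0,∞) such that: (i) y extends continuously to [a,b] with y(a) = y(b) = 0, and y'(x) → +∞ as x → a⁺ and y'(x) → −∞ as x → b⁻ (so y generates a closed C² hypersurface of revolution N₀ ⊂ ℝ^{n+1}); (ii) y''(x)/(1+y'(x)²) < (n−1)/y(x) for all x ∈ (a,b) (so N₀ has positive mean curvature H > 0); (iii) y' ≥ 0 on (a,α], y' ≤ 0 on [β,b), and y'(α) = y'(β) = 0 (so the bridge L₀ of N₀, the complement of its two caps, corresponds to the interval [α,β]); (iv) max_{x∈[α,β]} y(x)√(1+y'(x)²) < n^{n/(2(n−1))} · min_{x∈[α,β]} y(x) (so N₀ is admissible: max_{L̄₀} p / min_{L̄₀} p < n^{n/(2(n−1))} where p = 1/(y√(1+y'²))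 is the principal curvature of rotation); and (v) the planar region E = {(x,z) : x ∈ [a,b], |z| ≤ y(x)} is not star-shaped with respect to any of its points (so N₀ is not star-shaped). -/
/-!
The example is the surface of revolution of `y = √U` over `[-√39, √39]`, where
`U = 19773/12800 + 7x⁶/12000 - x⁸/64000 = (39 - x²)(3x⁶ + 5x⁴ + 195x² + 7605)/192000`
has `U' = x⁵(28 - x²)/8000` and `U'' = 7x⁴(20 - x²)/8000 < 2`. Since `y y'' = U''/2 - y'²`,
the bound on `U''` gives `H > 0`. The profile is a dumbbell with its neck at `0` and its
widest points at `±√28`, which bound the bridge; there `31/25 ≤ y` and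
`y √(1 + y'²) = √(U + U'²/4) ≤ 59/25`, a ratio below `2 ≤ n^{n/(2(n-1))}`.

A star centre of the region `|z| ≤ y(x)` must lie below the tangent line at every point of
the upper boundary and above its mirror image. At `x = ±√18` the neck is so steep that
`y < x y'`: the two tangent lines cross below the axis, which leaves no room for a centre.
-/

open Set Filter Topology

theorem HasDerivAt.div_two_sqrt {U U' : ℝ → ℝ} {u'' x : ℝ} (hU : HasDerivAt U (U' x) x)
    (hU' : HasDerivAt U' u'' x) (hx : 0 < U x) :
    HasDerivAt (fun x => U' x / (2 * √(U x)))
      ((u'' / 2 - (U' x / (2 * √(U x))) ^ 2) / √(U x)) x := by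
  have hs : 0 < √(U x) := Real.sqrt_pos.2 hx
  refine (hU'.div ((hU.sqrt hx.ne').const_mul 2) (by positivity)).congr_deriv ?_
  field_simp

theorem tendsto_div_two_sqrt_atTop {l : Filter ℝ} {U U' : ℝ → ℝ} {c : ℝ}
    (hU : Tendsto U l (𝓝[>] 0)) (hU' : Tendsto U' l (𝓝 c)) (hc : 0 < c) :
    Tendsto (fun x => U' x / (2 * √(U x))) l atTop := by
  have h : Tendsto (fun x => 2 * √(U x)) l (𝓝[>] 0) := by
    refine tendsto_nhdsWithin_iff.2 ⟨?_, ?_⟩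
    · simpa using ((Real.continuous_sqrt.tendsto 0).comp
        (tendsto_nhds_of_tendsto_nhdsWithin hU)).const_mul 2
    · filter_upwards [hU.eventually self_mem_nhdsWithin] with x hx
      exact mul_pos two_pos (Real.sqrt_pos.2 hx)
  exact (hU'.pos_mul_atTop hc (tendsto_inv_nhdsGT_zero.comp h)).congr
    fun x => (div_eq_mul_inv _ _).symm

theorem tendsto_div_two_sqrt_atBot {l : Filter ℝ} {U U' : ℝ → ℝ} {c : ℝ}
    (hU : Tendsto U l (𝓝[>] 0)) (hU' : Tendsto U' l (𝓝 c)) (hc : c < 0) :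
    Tendsto (fun x => U' x / (2 * √(U x))) l atBot := by
  refine (tendsto_neg_atTop_atBot.comp
    (tendsto_div_two_sqrt_atTop hU hU'.neg (neg_pos.2 hc))).congr fun x => ?_
  simp [neg_div]

def meridianRegion (a b : ℝ) (y : ℝ → ℝ) : Set (ℝ × ℝ) := {q | q.1 ∈ Icc a b ∧ |q.2| ≤ y q.1}

theorem StarConvex.abs_snd_le_tangent {a b t d : ℝ} {y : ℝ → ℝ} {p : ℝ × ℝ}
    (hp : StarConvex ℝ p (meridianRegion a b y)) (ht : t ∈ Icc a b) (hyt : 0 ≤ y t)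
    (hd : HasDerivAt y d t) : |p.2| ≤ y t + d * (p.1 - t) := by
  set c := p.1 - t
  have hg : HasDerivAt (fun s => y (t + s * c)) (d * c) 0 := by
    have hline : HasDerivAt (fun s : ℝ => t + s * c) c 0 := by
      simpa using ((hasDerivAt_id (0 : ℝ)).mul_const c).const_add t
    exact HasDerivAt.comp_of_eq 0 hd hline (by simp)
  suffices key : ∀ σ : ℝ, |σ| = 1 → σ * p.2 ≤ y t + d * c by
    refine abs_le.2 ⟨?_, by simpa using key 1 (by norm_num)⟩
    linarith [key (-1) (by norm_num)]
  intro σ hσ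
  have hσ2 : σ ^ 2 = 1 := by rw [← sq_abs, hσ, one_pow]
  have hq : (t, σ * y t) ∈ meridianRegion a b y :=
    ⟨ht, by simp [abs_mul, hσ, abs_of_nonneg hyt]⟩
  -- the segment from `(t, σ y t)` towards `p` stays inside, so the boundary rises at least
  -- as fast as the segment
  have hslope : ∀ s ∈ Ioo (0 : ℝ) 1, σ * p.2 - y t ≤ s⁻¹ * (y (t + s * c) - y t) := by
    intro s hs
    have hmem := (hp hq hs.1.le (sub_nonneg.2 hs.2.le) (add_sub_cancel s 1)).2
    simp only [Prod.fst_add, Prod.snd_add, Prod.smul_fst, Prod.smul_snd, smul_eq_mul] at hmem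
    rw [show s * p.1 + (1 - s) * t = t + s * c by ring] at hmem
    have hσv := le_abs_self (σ * (s * p.2 + (1 - s) * (σ * y t)))
    rw [abs_mul, hσ, one_mul] at hσv
    have hσy : σ * (s * p.2 + (1 - s) * (σ * y t)) = s * (σ * p.2) + (1 - s) * y t := by
      linear_combination (1 - s) * y t * hσ2
    rw [le_inv_mul_iff₀ hs.1]
    linarith
  have hlim : σ * p.2 - y t ≤ d * c := ge_of_tendsto hg.tendsto_slope_zero_right <| by
    filter_upwards [Ioo_mem_nhdsGT one_pos] with s hs
    simpa using hslope s hs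
  linarith

theorem not_starConvex_meridianRegion {a b t d : ℝ} {y : ℝ → ℝ} (ht : t ∈ Icc a b)
    (ht' : -t ∈ Icc a b) (hyt : 0 ≤ y t) (hy : y (-t) = y t) (hd : HasDerivAt y d t)
    (hd' : HasDerivAt y (-d) (-t)) (hsteep : y t < t * d) (p : ℝ × ℝ) :
    ¬ StarConvex ℝ p (meridianRegion a b y) := fun hp => by
  have h := hp.abs_snd_le_tangent ht hyt hd
  have h' := hp.abs_snd_le_tangent ht' (hy ▸ hyt) hd'
  rw [hy] at h'
  linarith [abs_nonneg p.2]

theorem two_le_rpow_div {n : ℕ} (hn : 2 ≤ n) :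
    (2 : ℝ) ≤ (n : ℝ) ^ ((n : ℝ) / (2 * ((n : ℝ) - 1))) := by
  obtain rfl | rfl | h4 : n = 2 ∨ n = 3 ∨ 4 ≤ n := by omega
  · norm_num
  · refine le_of_pow_le_pow_left₀ (n := 4) (by norm_num) (by positivity) ?_
    rw [← Real.rpow_mul_natCast (by norm_num)]
    norm_num
  · have h4 : (4 : ℝ) ≤ n := by exact_mod_cast h4
    calc (2 : ℝ) ≤ √n := Real.le_sqrt_of_sq_le (by linarith)
      _ = (n : ℝ) ^ (1 / 2 : ℝ) := Real.sqrt_eq_rpow n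
      _ ≤ (n : ℝ) ^ ((n : ℝ) / (2 * ((n : ℝ) - 1))) := by
        refine Real.rpow_le_rpow_of_exponent_le (by linarith) ?_
        rw [div_le_div_iff₀ (by norm_num) (by linarith)]
        linarith

theorem csSup_image_lt_mul_csInf_image {α : Type*} {s : Set α} (hs : s.Nonempty)
    {f g : α → ℝ} {M m K : ℝ} (hf : ∀ x ∈ s, f x ≤ M) (hg : ∀ x ∈ s, m ≤ g x) (hK : 0 ≤ K)
    (h : M < K * m) : sSup (f '' s) < K * sInf (g '' s) :=
  calc sSup (f '' s) ≤ M := csSup_le (hs.image f) (forall_mem_image.2 hf)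
    _ < K * m := h
    _ ≤ K * sInf (g '' s) :=
      mul_le_mul_of_nonneg_left (le_csInf (hs.image g) (forall_mem_image.2 hg)) hK

namespace Dumbbell

noncomputable section

def U (x : ℝ) : ℝ := 19773 / 12800 + 7 / 12000 * x ^ 6 - 1 / 64000 * x ^ 8

def U' (x : ℝ) : ℝ := x ^ 5 * (28 - x ^ 2) / 8000

def U'' (x : ℝ) : ℝ := 7 * x ^ 4 * (20 - x ^ 2) / 8000

def y (x : ℝ) : ℝ := √(U x)

def y' (x : ℝ) : ℝ := U' x / (2 * y x)

def y'' (x : ℝ) : ℝ := (U'' x / 2 - y' x ^ 2) / y x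

end

theorem U_eq (x : ℝ) :
    U x = (39 - x ^ 2) * (3 * x ^ 6 + 5 * x ^ 4 + 195 * x ^ 2 + 7605) / 192000 := by
  unfold U; ring

theorem hasDerivAt_U (x : ℝ) : HasDerivAt U (U' x) x := by
  refine ((((hasDerivAt_pow 6 x).const_mul (7 / 12000 : ℝ)).const_add (19773 / 12800)).sub
    ((hasDerivAt_pow 8 x).const_mul (1 / 64000 : ℝ))).congr_deriv ?_
  unfold U'; ring

theorem hasDerivAt_U' (x : ℝ) : HasDerivAt U' (U'' x) x := by
  have hU' : U' = fun x => (28 * x ^ 5 - x ^ 7) / 8000 := by ext x; unfold U'; ring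
  rw [hU']
  refine ((((hasDerivAt_pow 5 x).const_mul (28 : ℝ)).sub (hasDerivAt_pow 7 x)).div_const
    8000).congr_deriv ?_
  unfold U''; ring

theorem continuous_U : Continuous U := by unfold U; fun_prop

theorem continuous_U' : Continuous U' := by unfold U'; fun_prop

theorem continuous_U'' : Continuous U'' := by unfold U''; fun_prop

theorem U_pos {x : ℝ} (hx : x ^ 2 < 39) : 0 < U x := by
  have : 0 < 39 - x ^ 2 := by linarith
  rw [U_eq]; positivity

theorem U_even (x : ℝ) : U (-x) = U x := by unfold U; ring

theorem U'_odd (x : ℝ) : U' (-x) = -U' x := by unfold U'; ring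

theorem U_sqrt_39 : U √39 = 0 := by simp [U_eq]

theorem U'_sqrt_39_neg : U' √39 < 0 := by
  rw [U', Real.sq_sqrt (by norm_num)]
  have : 0 < √39 ^ 5 := by positivity
  linarith

theorem U''_lt_two (x : ℝ) : U'' x < 2 := by
  unfold U''
  nlinarith [mul_nonneg (sq_nonneg x) (sq_nonneg (3 * x ^ 2 - 40)), sq_nonneg (3 * x ^ 2 - 40)]

theorem le_U {x : ℝ} (hx : x ^ 2 ≤ 28) : (31 / 25) ^ 2 ≤ U x := by
  have : 0 ≤ x ^ 6 * (112 - 3 * x ^ 2) := mul_nonneg (by positivity) (by linarith)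
  unfold U; nlinarith

theorem U_add_U'_sq_le {x : ℝ} (hx : x ^ 2 ≤ 28) : U x + U' x ^ 2 / 4 ≤ (59 / 25) ^ 2 := by
  have h28 : 0 ≤ 28 - x ^ 2 := by linarith
  have hU : U x = 911251 / 192000 - (x ^ 2 - 28) ^ 2 * (3 * x ^ 4 + 56 * x ^ 2 + 784) / 192000 := by
    unfold U; ring
  -- the maximum of `U'²` on the bridge is attained at `x² = 20`
  have hU' : U' x ^ 2 = 16 / 5 - (x ^ 2 - 20) ^ 2 * (x ^ 8 * (28 - x ^ 2) +
      12 * x ^ 6 * (28 - x ^ 2) + 80 * x ^ 4 * (28 - x ^ 2) + 1600 * x ^ 4 + 51200 * x ^ 2 +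
      512000) / 64000000 := by
    unfold U'; ring
  have : 0 ≤ (x ^ 2 - 28) ^ 2 * (3 * x ^ 4 + 56 * x ^ 2 + 784) := by positivity
  have : 0 ≤ (x ^ 2 - 20) ^ 2 * (x ^ 8 * (28 - x ^ 2) + 12 * x ^ 6 * (28 - x ^ 2) +
      80 * x ^ 4 * (28 - x ^ 2) + 1600 * x ^ 4 + 51200 * x ^ 2 + 512000) := by positivity
  rw [hU, hU']
  linarith

theorem y_pos {x : ℝ} (hx : x ^ 2 < 39) : 0 < y x := Real.sqrt_pos.2 (U_pos hx)

theorem y_even (x : ℝ) : y (-x) = y x := by simp only [y, U_even]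

theorem y'_odd (x : ℝ) : y' (-x) = -y' x := by simp only [y', y_even, U'_odd, neg_div]

theorem y_sqrt_39 : y √39 = 0 := by simp [y, U_sqrt_39]

theorem continuous_y : Continuous y := Real.continuous_sqrt.comp continuous_U

theorem hasDerivAt_y {x : ℝ} (hx : x ^ 2 < 39) : HasDerivAt y (y' x) x :=
  (hasDerivAt_U x).sqrt (U_pos hx).ne'

theorem hasDerivAt_y' {x : ℝ} (hx : x ^ 2 < 39) : HasDerivAt y' (y'' x) x :=
  (hasDerivAt_U x).div_two_sqrt (hasDerivAt_U' x) (U_pos hx)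

theorem continuousAt_y'' {x : ℝ} (hx : x ^ 2 < 39) : ContinuousAt y'' x :=
  ((continuous_U''.continuousAt.div_const 2).sub ((hasDerivAt_y' hx).continuousAt.pow 2)).div
    continuous_y.continuousAt (y_pos hx).ne'

theorem tendsto_U_nhdsLT : Tendsto U (𝓝[<] √39) (𝓝[>] 0) := by
  refine tendsto_nhdsWithin_iff.2 ⟨?_, ?_⟩
  · have := continuous_U.continuousWithinAt (s := Iio √39) (x := √39)
    rwa [ContinuousWithinAt, U_sqrt_39] at this
  · filter_upwards [Ioo_mem_nhdsLT (show -√39 < √39 by simp)] with x hx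
    exact U_pos (Real.sq_lt.2 hx)

theorem tendsto_U_nhdsGT : Tendsto U (𝓝[>] (-√39)) (𝓝[>] 0) := by
  refine tendsto_nhdsWithin_iff.2 ⟨?_, ?_⟩
  · have := continuous_U.continuousWithinAt (s := Ioi (-√39)) (x := -√39)
    rwa [ContinuousWithinAt, U_even, U_sqrt_39] at this
  · filter_upwards [Ioo_mem_nhdsGT (show -√39 < √39 by simp)] with x hx
    exact U_pos (Real.sq_lt.2 hx)

theorem tendsto_y'_nhdsGT : Tendsto y' (𝓝[>] (-√39)) atTop :=
  tendsto_div_two_sqrt_atTop tendsto_U_nhdsGT continuous_U'.continuousWithinAt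
    (by rw [U'_odd]; linarith [U'_sqrt_39_neg])

theorem tendsto_y'_nhdsLT : Tendsto y' (𝓝[<] √39) atBot :=
  tendsto_div_two_sqrt_atBot tendsto_U_nhdsLT continuous_U'.continuousWithinAt U'_sqrt_39_neg

theorem y''_div_lt {x : ℝ} (hx : x ^ 2 < 39) {m : ℝ} (hm : 1 ≤ m) :
    y'' x / (1 + y' x ^ 2) < m / y x := by
  have hy := y_pos hx
  have hU'' := U''_lt_two x
  rw [y'', div_div, div_lt_div_iff₀ (by positivity) hy, mul_comm (y x), ← mul_assoc]
  gcongr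
  nlinarith [sq_nonneg (y' x)]

theorem y'_nonpos {x : ℝ} (hx : √28 ≤ x) : y' x ≤ 0 := by
  have hx0 : 0 ≤ x := (Real.sqrt_nonneg 28).trans hx
  have h28 : 28 ≤ x ^ 2 := (Real.sqrt_le_left hx0).1 hx
  have : U' x ≤ 0 := by
    unfold U'
    have : x ^ 5 * (28 - x ^ 2) ≤ 0 := mul_nonpos_of_nonneg_of_nonpos (by positivity) (by linarith)
    linarith
  exact div_nonpos_of_nonpos_of_nonneg this (mul_nonneg zero_le_two (Real.sqrt_nonneg _))

theorem y'_nonneg {x : ℝ} (hx : x ≤ -√28) : 0 ≤ y' x := by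
  have := y'_nonpos (le_neg_of_le_neg hx)
  rw [y'_odd] at this
  linarith

theorem y'_sqrt_28 : y' √28 = 0 := by simp [y', U']

theorem y_mul_sqrt_one_add_y'_sq {x : ℝ} (hx : x ^ 2 < 39) :
    y x * √(1 + y' x ^ 2) = √(U x + U' x ^ 2 / 4) := by
  have hU := (U_pos hx).ne'
  rw [y', div_pow, mul_pow, y, Real.sq_sqrt (U_pos hx).le, ← Real.sqrt_mul (U_pos hx).le]
  congr 1
  field_simp
  ring

theorem y_lt_mul_y'_sqrt_18 : y √18 < √18 * y' √18 := by
  have ht : √18 ^ 2 = 18 := Real.sq_sqrt (by norm_num)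
  have hU : U √18 = 634851 / 192000 := by
    rw [U_eq, show √18 ^ 4 = (√18 ^ 2) ^ 2 by ring, show √18 ^ 6 = (√18 ^ 2) ^ 3 by ring, ht]
    norm_num
  have hU' : √18 * U' √18 = 729 / 100 := by
    rw [U', show √18 * (√18 ^ 5 * (28 - √18 ^ 2) / 8000) = (√18 ^ 2) ^ 3 * (28 - √18 ^ 2) / 8000
      by ring, ht]
    norm_num
  have hy : 0 < y √18 := y_pos (by rw [ht]; norm_num)
  have hyy : y √18 ^ 2 = U √18 := Real.sq_sqrt (U_pos (by rw [ht]; norm_num)).le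
  rw [y', mul_div_assoc', lt_div_iff₀ (by positivity), hU']
  nlinarith

theorem sSup_lt_mul_sInf {K : ℝ} (hK : 2 ≤ K) :
    sSup ((fun x => y x * √(1 + y' x ^ 2)) '' Icc (-√28) √28) <
      K * sInf (y '' Icc (-√28) √28) := by
  have h28 : ∀ x ∈ Icc (-√28) √28, x ^ 2 ≤ 28 := fun x hx => (Real.sq_le (by norm_num)).2 hx
  refine csSup_image_lt_mul_csInf_image (nonempty_Icc.2 (neg_le_self (Real.sqrt_nonneg _)))
    (M := 59 / 25) (m := 31 / 25) (fun x hx => ?_) (fun x hx => ?_) (by linarith) (by linarith)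
  · rw [y_mul_sqrt_one_add_y'_sq ((h28 x hx).trans_lt (by norm_num))]
    exact (Real.sqrt_le_left (by norm_num)).2 (U_add_U'_sq_le (h28 x hx))
  · exact Real.le_sqrt_of_sq_le (le_U (h28 x hx))

theorem not_starConvex (p : ℝ × ℝ) : ¬ StarConvex ℝ p (meridianRegion (-√39) √39 y) := by
  have h18 : √18 ^ 2 = 18 := Real.sq_sqrt (by norm_num)
  have hmem : ∀ t, t ^ 2 = 18 → t ∈ Icc (-√39) √39 := fun t ht =>
    (Real.sq_le (by norm_num)).1 (by rw [ht]; norm_num)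
  have hd' := hasDerivAt_y (x := -√18) (by rw [neg_sq, h18]; norm_num)
  rw [y'_odd] at hd'
  exact not_starConvex_meridianRegion (y := y) (hmem _ h18) (hmem _ (by rw [neg_sq, h18]))
    (Real.sqrt_nonneg _) (y_even _) (hasDerivAt_y (by rw [h18]; norm_num)) hd' y_lt_mul_y'_sqrt_18 p

end Dumbbell

open Dumbbell in
/-- Proposition A.2: for every `n ≥ 2` there is a generating graph
`y : (a,b) → (0,∞)` of a closed `C²` hypersurface of revolution `N₀ ⊂ ℝ^{n+1}` which
(i) closes up at the axis, (ii) has `H > 0` (`y''/(1+y'²) < (n-1)/y`), (iii) has bridge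
`[α,β]`, (iv) is admissible (`max_{L̄₀} p / min_{L̄₀} p < n^{n/(2(n-1))}`, i.e.
`max y√(1+y'²) < n^{n/(2(n-1))} min y` over `[α,β]`), and (v) whose enclosed planar region
is not star-shaped with respect to any of its points. -/
theorem exists_nonstarshaped_admissible (n : ℕ) (hn : 2 ≤ n) :
    ∃ (a α β b : ℝ) (y y' y'' : ℝ → ℝ),
      a < α ∧ α < β ∧ β < b ∧
      ContinuousOn y (Icc a b) ∧
      y a = 0 ∧ y b = 0 ∧
      (∀ x ∈ Ioo a b, 0 < y x) ∧
      (∀ x ∈ Ioo a b, HasDerivAt y (y' x) x) ∧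
      (∀ x ∈ Ioo a b, HasDerivAt y' (y'' x) x) ∧
      ContinuousOn y'' (Ioo a b) ∧
      Tendsto y' (nhdsWithin a (Ioi a)) atTop ∧
      Tendsto y' (nhdsWithin b (Iio b)) atBot ∧
      (∀ x ∈ Ioo a b, y'' x / (1 + y' x ^ 2) < ((n : ℝ) - 1) / y x) ∧
      (∀ x ∈ Ioc a α, 0 ≤ y' x) ∧
      (∀ x ∈ Ico β b, y' x ≤ 0) ∧
      y' α = 0 ∧ y' β = 0 ∧
      sSup ((fun x => y x * Real.sqrt (1 + y' x ^ 2)) '' Icc α β) <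
        (n : ℝ) ^ ((n : ℝ) / (2 * ((n : ℝ) - 1))) * sInf (y '' Icc α β) ∧
      ¬ ∃ p ∈ {q : ℝ × ℝ | q.1 ∈ Icc a b ∧ |q.2| ≤ y q.1},
        ∀ q ∈ {q : ℝ × ℝ | q.1 ∈ Icc a b ∧ |q.2| ≤ y q.1},
          segment ℝ p q ⊆ {q : ℝ × ℝ | q.1 ∈ Icc a b ∧ |q.2| ≤ y q.1} := by
  have h39 : ∀ x ∈ Ioo (-√39) √39, x ^ 2 < 39 := fun x hx => Real.sq_lt.2 hx
  have h2839 : √28 < √39 := Real.sqrt_lt_sqrt (by norm_num) (by norm_num)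
  have hn1 : (1 : ℝ) ≤ n - 1 := by
    have : (2 : ℝ) ≤ n := by exact_mod_cast hn
    linarith
  refine ⟨-√39, -√28, √28, √39, y, y', y'', neg_lt_neg h2839, neg_lt_self (by positivity),
    h2839, continuous_y.continuousOn, by rw [y_even, y_sqrt_39], y_sqrt_39,
    fun x hx => y_pos (h39 x hx), fun x hx => hasDerivAt_y (h39 x hx),
    fun x hx => hasDerivAt_y' (h39 x hx),
    fun x hx => (continuousAt_y'' (h39 x hx)).continuousWithinAt, tendsto_y'_nhdsGT,
    tendsto_y'_nhdsLT, fun x hx => y''_div_lt (h39 x hx) hn1, fun x hx => y'_nonneg hx.2,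
    fun x hx => y'_nonpos hx.1, by rw [y'_odd, y'_sqrt_28, neg_zero], y'_sqrt_28,
    sSup_lt_mul_sInf (two_le_rpow_div hn), ?_⟩
  rintro ⟨p, -, hp⟩
  exact not_starConvex p (starConvex_iff_segment_subset.2 hp)
end
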